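/- arXiv:1910.12405 — 7 statements merged into one kernel-verified Lean document; each statement's English description precedes it below -/
import Mathlib

section
/- Let A be an associative (unital) ring in which p·1 = 0 for a prime p, and let x, y ∈ A. Write ad_a(b) := a*b − b*a. Assume that the elements x, ad_y(x), ad_y^2(x), ad_y^3(x), … (all iterated adjoints ad_y^n(x), n ≥ 0) pairwise commute. Then (x*y)^p = x^p * y^p + (ad_{x*y})^{p−1}(x) * y, where (ad_{x*y})^{p−1} denotes the (p−1)-fold iterate of the map b ↦ (x*y)*b − b*(x*y). -/
namespace HochschildAux
open Finset

variable {R : Type*} [Ring R]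

/-- coefficients of the expansion of `(x*y)^n` / `(x∘d)^n`. -/
def coeffs (x : R) (d : R → R) : ℕ → ℕ → R
  | 0, 0 => 1
  | 0, _+1 => 0
  | n+1, 0 => x * d (coeffs x d n 0)
  | n+1, k+1 => x * coeffs x d n k + x * d (coeffs x d n (k+1))

variable {x : R} {d : R → R}

theorem coeffs_of_lt (hd0 : d 0 = 0) : ∀ {n k : ℕ}, n < k → coeffs x d n k = 0
  | 0, k+1, _ => rfl
  | n+1, k+1, h => by
    rw [coeffs, coeffs_of_lt hd0 (by omega), coeffs_of_lt hd0 (by omega), hd0]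
    simp

theorem coeffs_zero (hd0 : d 0 = 0) (hd1 : d 1 = 0) : ∀ {n : ℕ}, 0 < n → coeffs x d n 0 = 0
  | 1, _ => by rw [coeffs, coeffs, hd1, mul_zero]
  | n+2, _ => by rw [coeffs, coeffs_zero hd0 hd1 (by omega), hd0, mul_zero]

theorem coeffs_diag (hd0 : d 0 = 0) : ∀ n : ℕ, coeffs x d n n = x ^ n
  | 0 => by rw [coeffs, pow_zero]
  | n+1 => by
    rw [coeffs, coeffs_diag hd0 n, coeffs_of_lt hd0 (by omega), hd0, mul_zero, add_zero,
      pow_succ']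

theorem coeffs_one (hd0 : d 0 = 0) (hd1 : d 1 = 0) :
    ∀ n : ℕ, coeffs x d (n+1) 1 = (fun b => x * d b)^[n] x
  | 0 => by
    rw [coeffs, coeffs, coeffs, hd0, mul_zero, mul_one, add_zero, Function.iterate_zero_apply]
  | n+1 => by
    rw [coeffs, coeffs_zero hd0 hd1 (by omega), mul_zero, zero_add, coeffs_one hd0 hd1 n,
      Function.iterate_succ_apply']

theorem coeffs_map {S : Type*} [Ring S] (φ : R →+* S) {x' : S} {d' : S → S}
    (hx : φ x = x') (hint : ∀ a, φ (d a) = d' (φ a)) :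
    ∀ n k, φ (coeffs x d n k) = coeffs x' d' n k
  | 0, 0 => by rw [coeffs, coeffs, map_one]
  | 0, k+1 => by rw [coeffs, coeffs, map_zero]
  | n+1, 0 => by
    rw [coeffs, coeffs, map_mul, hx, hint, coeffs_map φ hx hint n 0]
  | n+1, k+1 => by
    rw [coeffs, coeffs, map_add, map_mul, map_mul, hx, hint,
      coeffs_map φ hx hint n k, coeffs_map φ hx hint n (k+1)]

end HochschildAux
namespace HochschildAux
open Finset

variable {R : Type*} [Ring R]

/-- expansion of `(x*y)^n` in terms of the coefficients. -/
theorem pow_mul_expand (x y : R) (n : ℕ) :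
    (x * y) ^ n = ∑ k ∈ range (n+1), coeffs x (fun b => y * b - b * y) n k * y ^ k := by
  set d : R → R := fun b => y * b - b * y with hd
  have hd0 : d 0 = 0 := by simp [hd]
  induction n with
  | zero => simp [coeffs]
  | succ n ih =>
    rw [pow_succ', ih, Finset.mul_sum]
    have key : ∀ k, (x * y) * (coeffs x d n k * y ^ k)
        = x * coeffs x d n k * y ^ (k+1) + x * d (coeffs x d n k) * y ^ k := by
      intro k
      simp only [hd, pow_succ']
      generalize coeffs x d n k = c
      noncomm_ring
    simp only [key]
    rw [Finset.sum_add_distrib]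
    -- RHS: split off k = 0 and shift
    rw [Finset.sum_range_succ' (fun k => coeffs x d (n+1) k * y ^ k)]
    simp only [coeffs]
    rw [pow_zero, mul_one]
    simp only [add_mul]
    rw [Finset.sum_add_distrib]
    rw [Finset.sum_range_succ (fun k => x * d (coeffs x d n (k+1)) * y ^ (k+1))]
    rw [coeffs_of_lt hd0 (by omega), hd0, mul_zero, zero_mul, add_zero]
    rw [Finset.sum_range_succ' (fun k => x * d (coeffs x d n k) * y ^ k)]
    rw [pow_zero, mul_one]
    abel


end HochschildAux
namespace HochschildAux
open Finset

variable {R : Type*} [CommRing R]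

/-- iterated Leibniz rule. -/
theorem iterate_leibniz (d : R → R) (hadd : ∀ a b, d (a + b) = d a + d b)
    (hmul : ∀ a b, d (a * b) = a * d b + d a * b) (n : ℕ) (a b : R) :
    d^[n] (a * b) = ∑ k ∈ range (n+1), n.choose k • (d^[k] a * d^[n-k] b) := by
  let dh : R →+ R := AddMonoidHom.mk' d hadd
  have hdh : ∀ t, d t = dh t := fun t => rfl
  induction n with
  | zero => simp
  | succ n ih =>
    rw [Function.iterate_succ_apply', ih, hdh, map_sum]
    have step : ∀ k ∈ range (n+1), dh (n.choose k • (d^[k] a * d^[n-k] b))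
        = n.choose k • (d^[k] a * d^[n+1-k] b) + n.choose k • (d^[k+1] a * d^[n-k] b) := by
      intro k hk
      simp only [mem_range] at hk
      have hnk : n + 1 - k = n - k + 1 := by omega
      rw [map_nsmul, ← hdh, hmul, smul_add, hnk]
      rw [← Function.iterate_succ_apply' d (n-k) b, ← Function.iterate_succ_apply' d k a]
    rw [Finset.sum_congr rfl step, Finset.sum_add_distrib]
    rw [Finset.sum_range_succ' (fun k => (n+1).choose k • (d^[k] a * d^[n+1-k] b))]
    simp only [Nat.choose_succ_succ, add_smul, Nat.succ_sub_succ_eq_sub,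
      Nat.choose_zero_right, one_smul, Function.iterate_zero_apply, Nat.sub_zero]
    rw [Finset.sum_add_distrib]
    rw [Finset.sum_range_succ (fun k => n.choose (k+1) • (d^[k+1] a * d^[n-k] b))]
    rw [Nat.choose_succ_self, zero_smul, add_zero]
    rw [Finset.sum_range_succ' (fun k => n.choose k • (d^[k] a * d^[n+1-k] b))]
    simp only [Nat.succ_sub_succ_eq_sub, Nat.choose_zero_right, one_smul,
      Function.iterate_zero_apply, Nat.sub_zero]
    abel

/-- operator expansion: `(x·d)^n f = ∑ coeffs · d^k f`. -/
theorem op_expand (d : R → R) (hadd : ∀ a b, d (a + b) = d a + d b)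
    (hmul : ∀ a b, d (a * b) = a * d b + d a * b) (x : R) (n : ℕ) (f : R) :
    (fun b => x * d b)^[n] f = ∑ k ∈ range (n+1), coeffs x d n k * d^[k] f := by
  have hd0 : d 0 = 0 := by
    have := hadd 0 0
    simpa using this
  let dh : R →+ R := AddMonoidHom.mk' d hadd
  have hdh : ∀ t, d t = dh t := fun t => rfl
  induction n with
  | zero => simp [coeffs]
  | succ n ih =>
    rw [Function.iterate_succ_apply', ih]
    show x * d _ = _
    rw [hdh, map_sum, Finset.mul_sum]
    have key : ∀ k ∈ range (n+1), x * dh (coeffs x d n k * d^[k] f)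
        = x * coeffs x d n k * d^[k+1] f + x * d (coeffs x d n k) * d^[k] f := by
      intro k _
      rw [← hdh, hmul, ← Function.iterate_succ_apply' d k f]
      ring
    rw [Finset.sum_congr rfl key, Finset.sum_add_distrib]
    rw [Finset.sum_range_succ' (fun k => coeffs x d (n+1) k * d^[k] f)]
    simp only [coeffs]
    rw [Function.iterate_zero_apply]
    simp only [add_mul]
    rw [Finset.sum_add_distrib]
    rw [Finset.sum_range_succ (fun k => x * d (coeffs x d n (k+1)) * d^[k+1] f)]
    rw [coeffs_of_lt hd0 (by omega), hd0, mul_zero, zero_mul, add_zero]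
    rw [Finset.sum_range_succ' (fun k => x * d (coeffs x d n k) * d^[k] f)]
    rw [Function.iterate_zero_apply]
    abel

end HochschildAux
namespace HochschildAux
open MvPolynomial Finset

variable (p : ℕ)

/-- the generic differential polynomial ring. -/
noncomputable def DB : Derivation (ZMod p) (MvPolynomial ℕ (ZMod p)) (MvPolynomial ℕ (ZMod p)) :=
  mkDerivation _ (fun n => X (n+1))

/-- the extended generic ring, with an extra variable `w` with `D w = 1`. -/
noncomputable def DB' :
    Derivation (ZMod p) (MvPolynomial (Option ℕ) (ZMod p)) (MvPolynomial (Option ℕ) (ZMod p)) :=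
  mkDerivation _ (fun o => Option.elim o 1 (fun n => X (some (n+1))))

theorem DB'_w : DB' p (X none) = 1 := by simp [DB', mkDerivation_X]

theorem DB'_X (n : ℕ) : DB' p (X (some n)) = X (some (n+1)) := by simp [DB', mkDerivation_X]

theorem DB_X (n : ℕ) : DB p (X n) = X (n+1) := by simp [DB, mkDerivation_X]

theorem DB_mul (f g : MvPolynomial ℕ (ZMod p)) :
    DB p (f * g) = f * DB p g + DB p f * g := by
  rw [Derivation.leibniz, smul_eq_mul, smul_eq_mul]
  ring

theorem DB'_mul (f g : MvPolynomial (Option ℕ) (ZMod p)) :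
    DB' p (f * g) = f * DB' p g + DB' p f * g := by
  rw [Derivation.leibniz, smul_eq_mul, smul_eq_mul]
  ring

theorem rename_DB (f : MvPolynomial ℕ (ZMod p)) :
    rename some (DB p f) = DB' p (rename some f) := by
  induction f using MvPolynomial.induction_on with
  | C r => simp [DB, DB']
  | add f g hf hg =>
    rw [map_add, map_add, map_add, hf, hg]
    exact (map_add _ _ _).symm
  | mul_X f n ih =>
    simp only [DB_mul, DB'_mul, map_add, map_mul, rename_X, DB_X, DB'_X, ih]

theorem DB'_iter_w_pow (m : ℕ) :
    ∀ k : ℕ, (⇑(DB' p))^[k] ((X none : MvPolynomial (Option ℕ) (ZMod p)) ^ m)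
      = (m.descFactorial k : MvPolynomial (Option ℕ) (ZMod p)) * (X none) ^ (m - k)
  | 0 => by simp
  | k+1 => by
    rw [Function.iterate_succ_apply', DB'_iter_w_pow m k]
    have hc : (m.descFactorial k : MvPolynomial (Option ℕ) (ZMod p))
        = C ((m.descFactorial k : ZMod p)) := by
      rw [map_natCast (C : ZMod p →+* MvPolynomial (Option ℕ) (ZMod p))]
    have h0 : DB' p ((m.descFactorial k : MvPolynomial (Option ℕ) (ZMod p))) = 0 := by
      rw [hc]; exact derivation_C _ _
    rw [DB'_mul, h0, zero_mul, add_zero, Derivation.leibniz_pow, DB'_w, smul_eq_mul, mul_one,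
      nsmul_eq_mul, Nat.descFactorial_succ, Nat.cast_mul, Nat.sub_sub]
    ring

end HochschildAux
namespace HochschildAux
open MvPolynomial Finset

variable (p : ℕ) [hp : Fact p.Prime]

theorem coeffs_vanish (m : ℕ) (hm : 2 ≤ m) (hmp : m < p) :
    coeffs (X 0 : MvPolynomial ℕ (ZMod p)) (⇑(DB p)) p m = 0 := by
  set B' := MvPolynomial (Option ℕ) (ZMod p) with hB'
  set w : B' := X none with hw
  set x0 : B' := X (some 0) with hx0
  set D' : B' → B' := ⇑(DB' p) with hD'
  have hadd' : ∀ a b : B', D' (a+b) = D' a + D' b := fun a b => map_add _ a b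
  have hmul' : ∀ a b : B', D' (a*b) = a * D' b + D' a * b := DB'_mul p
  set E' : B' → B' := fun b => x0 * D' b with hE'
  have Eadd : ∀ a b, E' (a+b) = E' a + E' b := by
    intro a b; simp only [hE', hadd', mul_add]
  have Emul : ∀ a b, E' (a*b) = a * E' b + E' a * b := by
    intro a b; simp only [hE', hmul']; ring
  have hm1 : m - 1 + 1 = m := by omega
  have hwm : w * w^(m-1) = w^m := by rw [← pow_succ', hm1]
  have step2 : E'^[p] (w^m) = w * E'^[p] (w^(m-1)) + E'^[p] w * w^(m-1) := by
    have h := iterate_leibniz E' Eadd Emul p w (w^(m-1))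
    rw [hwm] at h
    rw [h]
    have hsub : ({0, p} : Finset ℕ) ⊆ range (p+1) := by
      intro k hk
      simp only [mem_insert, mem_singleton] at hk
      rcases hk with rfl|rfl <;> simp [mem_range]
    have hzero : ∀ k ∈ range (p+1), k ∉ ({0, p} : Finset ℕ) →
        p.choose k • (E'^[k] w * E'^[p-k] (w^(m-1))) = 0 := by
      intro k hk hnk
      simp only [mem_insert, mem_singleton] at hnk
      push_neg at hnk
      simp only [mem_range] at hk
      have hck : (p.choose k : B') = 0 := by
        rw [CharP.cast_eq_zero_iff B' p]
        exact hp.out.dvd_choose_self hnk.1 (by omega)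
      rw [nsmul_eq_mul, hck, zero_mul]
    rw [← Finset.sum_subset hsub hzero, Finset.sum_pair (show (0:ℕ) ≠ p from
      (hp.out.ne_zero).symm)]
    simp only [Nat.choose_zero_right, one_smul, Function.iterate_zero_apply, Nat.sub_zero,
      Nat.choose_self, Nat.sub_self]
  set ev : B' →ₐ[ZMod p] MvPolynomial ℕ (ZMod p) :=
    aeval (fun o : Option ℕ => Option.elim o 0 X) with hev
  have hevw : ev w = 0 := by
    show (aeval fun o : Option ℕ => Option.elim o 0 X) (X none) = 0
    rw [aeval_X]
    rfl
  have hev0 : ev (E'^[p] (w^m)) = 0 := by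
    rw [step2, map_add, map_mul, map_mul, hevw, zero_mul, map_pow, hevw,
      zero_pow (show m - 1 ≠ 0 by omega), mul_zero, add_zero]
  have step1 := op_expand D' hadd' hmul' x0 p (w^m)
  rw [← hE'] at step1
  have hc : ∀ k, ev (coeffs x0 D' p k) = coeffs (X 0 : MvPolynomial ℕ (ZMod p)) (⇑(DB p)) p k := by
    intro k
    have h1 : ((rename some).toRingHom : MvPolynomial ℕ (ZMod p) →+* B')
        (X 0 : MvPolynomial ℕ (ZMod p)) = x0 := by
      simp [rename_X, hx0]
    have h2 : ∀ a : MvPolynomial ℕ (ZMod p),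
        ((rename some).toRingHom : MvPolynomial ℕ (ZMod p) →+* B') (DB p a)
          = D' (((rename some).toRingHom : MvPolynomial ℕ (ZMod p) →+* B') a) :=
      rename_DB p
    rw [← coeffs_map ((rename some).toRingHom : MvPolynomial ℕ (ZMod p) →+* B') h1 h2 p k]
    show ev (rename some _) = _
    rw [hev, aeval_rename]
    exact aeval_X_left_apply _
  have hD'k : ∀ k, ev (D'^[k] (w^m))
      = (m.descFactorial k : MvPolynomial ℕ (ZMod p)) * (0 : MvPolynomial ℕ (ZMod p))^(m-k) := by
    intro k
    rw [hD', DB'_iter_w_pow p m k, map_mul, map_pow, ← hw, hevw, map_natCast]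
  have hsum0 : ev (E'^[p] (w^m)) = ∑ k ∈ range (p+1),
      coeffs (X 0 : MvPolynomial ℕ (ZMod p)) (⇑(DB p)) p k
        * ((m.descFactorial k : MvPolynomial ℕ (ZMod p)) * 0^(m-k)) := by
    rw [step1, map_sum]
    refine Finset.sum_congr rfl fun k _ => ?_
    rw [map_mul, hc, hD'k]
  have hsum : (0 : MvPolynomial ℕ (ZMod p)) = ∑ k ∈ range (p+1),
      coeffs (X 0 : MvPolynomial ℕ (ZMod p)) (⇑(DB p)) p k
        * ((m.descFactorial k : MvPolynomial ℕ (ZMod p)) * 0^(m-k)) :=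
    hev0.symm.trans hsum0
  have hite : ∀ k ∈ range (p+1),
      coeffs (X 0 : MvPolynomial ℕ (ZMod p)) (⇑(DB p)) p k
        * ((m.descFactorial k : MvPolynomial ℕ (ZMod p)) * 0^(m-k))
      = if k = m then coeffs (X 0 : MvPolynomial ℕ (ZMod p)) (⇑(DB p)) p k
          * (m.factorial : MvPolynomial ℕ (ZMod p)) else 0 := by
    intro k _
    rcases lt_trichotomy k m with h|rfl|h
    · rw [if_neg (by omega), zero_pow (show m - k ≠ 0 by omega), mul_zero, mul_zero]
    · rw [if_pos rfl, Nat.sub_self, pow_zero, mul_one, Nat.descFactorial_self]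
    · rw [if_neg (by omega), (Nat.descFactorial_eq_zero_iff_lt).mpr h]
      simp
  rw [Finset.sum_congr rfl hite, Finset.sum_ite_eq' (range (p+1)) m] at hsum
  rw [if_pos (by simp only [mem_range]; omega)] at hsum
  have hmf : ((m.factorial : ℕ) : MvPolynomial ℕ (ZMod p)) ≠ 0 := by
    rw [Ne, CharP.cast_eq_zero_iff (MvPolynomial ℕ (ZMod p)) p, hp.out.dvd_factorial]
    omega
  rcases mul_eq_zero.mp hsum.symm with h|h
  · exact h
  · exact absurd h hmf

end HochschildAux
open HochschildAux Finset MvPolynomial in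
/-- **Hochschild's identity.** In an associative unital ring `A` of characteristic `p`
(`p` prime), if `x` and all iterated adjoints `ad_y^n(x)` pairwise commute, then
`(x*y)^p = x^p * y^p + (ad_{x*y})^{p-1}(x) * y`. -/
theorem hochschild_identity (A : Type*) [Ring A] (p : ℕ) (hp : p.Prime)
    (hchar : (p : A) = 0) (x y : A)
    (hcomm : ∀ m n : ℕ,
      Commute ((fun b => y * b - b * y)^[m] x) ((fun b => y * b - b * y)^[n] x)) :
    (x * y) ^ p =
      x ^ p * y ^ p + (fun b => (x * y) * b - b * (x * y))^[p - 1] x * y := by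
  rcases subsingleton_or_nontrivial A with hA | hA
  · exact Subsingleton.elim _ _
  haveI : Fact p.Prime := ⟨hp⟩
  have hrc : ringChar A = p := by
    rcases (hp.eq_one_or_self_of_dvd _ (ringChar.dvd hchar)) with h | h
    · exact absurd h (CharP.char_ne_one A (ringChar A))
    · exact h
  haveI : CharP A p := hrc ▸ ringChar.charP A
  set dy : A → A := fun b => y * b - b * y with hdy
  have hdy0 : dy 0 = 0 := by simp [hdy]
  have hdy1 : dy 1 = 0 := by simp [hdy]
  have hdyadd : ∀ a b, dy (a + b) = dy a + dy b := by
    intro a b; simp only [hdy]; noncomm_ring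
  have hdyneg : ∀ a, dy (-a) = - dy a := by
    intro a; simp only [hdy]; noncomm_ring
  have hdymul : ∀ a b, dy (a * b) = a * dy b + dy a * b := by
    intro a b; simp only [hdy]; noncomm_ring
  set z : ℕ → A := fun n => dy^[n] x with hz
  set Zc : Subring A := Subring.closure (Set.range z) with hZc
  have hxZ : x ∈ Zc := Subring.subset_closure ⟨0, rfl⟩
  have hcomm' : ∀ a ∈ Zc, ∀ b ∈ Zc, a * b = b * a := by
    intro a ha b hb
    refine Subring.closure_induction₂ (p := fun a b _ _ => a * b = b * a)
      ?_ ?_ ?_ ?_ ?_ ?_ ?_ ?_ ?_ ?_ ?_ ha hb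
    · rintro _ _ ⟨m, rfl⟩ ⟨n, rfl⟩; exact (hcomm m n).eq
    · intro a _; rw [zero_mul, mul_zero]
    · intro a _; rw [zero_mul, mul_zero]
    · intro a _; rw [one_mul, mul_one]
    · intro a _; rw [one_mul, mul_one]
    · intro a b _ _ h; rw [neg_mul, mul_neg, h]
    · intro a b _ _ h; rw [neg_mul, mul_neg, h]
    · intro a b c _ _ _ h1 h2; rw [add_mul, mul_add, h1, h2]
    · intro a b c _ _ _ h1 h2; rw [add_mul, mul_add, h1, h2]
    · intro a b c _ _ _ h1 h2; rw [mul_assoc, h2, ← mul_assoc, h1, mul_assoc]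
    · intro a b c _ _ _ h1 h2; rw [← mul_assoc, h1, mul_assoc, h2, ← mul_assoc]
  have hdyZ : ∀ b ∈ Zc, dy b ∈ Zc := by
    intro b hb
    refine Subring.closure_induction (p := fun b _ => dy b ∈ Zc) ?_ ?_ ?_ ?_ ?_ ?_ hb
    · rintro _ ⟨n, rfl⟩
      rw [show dy (z n) = z (n+1) from (Function.iterate_succ_apply' dy n x).symm]
      exact Subring.subset_closure ⟨n+1, rfl⟩
    · show dy (0:A) ∈ Zc
      rw [hdy0]; exact zero_mem _
    · show dy (1:A) ∈ Zc
      rw [hdy1]; exact zero_mem _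
    · intro a b _ _ iha ihb; rw [hdyadd]; exact add_mem iha ihb
    · intro a _ iha; rw [hdyneg]; exact neg_mem iha
    · intro a b ha' hb' iha ihb; rw [hdymul]; exact add_mem (mul_mem ha' ihb) (mul_mem iha hb')
  letI commZ : CommRing Zc :=
    { (inferInstance : Ring Zc) with
      mul_comm := fun a b => Subtype.ext (hcomm' a a.2 b b.2) }
  set ζ : ℕ → Zc := fun n => ⟨z n, Subring.subset_closure ⟨n, rfl⟩⟩ with hζ
  set φ : MvPolynomial ℕ (ZMod p) →+* Zc := eval₂Hom (ZMod.castHom dvd_rfl Zc) ζ with hφ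
  set ψ : MvPolynomial ℕ (ZMod p) →+* A := Zc.subtype.comp φ with hψ
  have h_x : ψ (X 0) = x := by
    rw [hψ, RingHom.comp_apply, hφ, eval₂Hom_X']
    rfl
  have h_int : ∀ f, ψ (DB p f) = dy (ψ f) := by
    intro f
    induction f using MvPolynomial.induction_on with
    | C r =>
      rw [show DB p (C r) = 0 from derivation_C _ r, map_zero]
      obtain ⟨k, rfl⟩ : ∃ k : ℕ, (k : ZMod p) = r := ⟨r.val, ZMod.natCast_rightInverse r⟩
      rw [show (C ((k : ZMod p)) : MvPolynomial ℕ (ZMod p)) = (k : MvPolynomial ℕ (ZMod p))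
          from (map_natCast (C : ZMod p →+* MvPolynomial ℕ (ZMod p)) k), map_natCast ψ k]
      simp only [hdy]
      symm
      rw [sub_eq_zero]
      exact ((Nat.cast_commute (α := A) k y).eq).symm
    | add f g hf hg => rw [map_add, map_add, hf, hg, map_add, hdyadd]
    | mul_X f n ih =>
      have hXn : ψ (X n) = z n := by
        rw [hψ, RingHom.comp_apply, hφ, eval₂Hom_X']; rfl
      have hXn1 : ψ (X (n+1)) = z (n+1) := by
        rw [hψ, RingHom.comp_apply, hφ, eval₂Hom_X']; rfl
      rw [DB_mul, map_add, map_mul, map_mul, DB_X, hXn, hXn1, ih, map_mul, hXn, hdymul]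
      rw [show dy (z n) = z (n+1) from (Function.iterate_succ_apply' dy n x).symm]
  have hcoeff : ∀ n k, ψ (coeffs (X 0 : MvPolynomial ℕ (ZMod p)) (⇑(DB p)) n k)
      = coeffs x dy n k := coeffs_map ψ h_x h_int
  have hvanish : ∀ k, 2 ≤ k → k ≤ p - 1 → coeffs x dy p k = 0 := by
    intro k h2 h3
    rw [← hcoeff p k, coeffs_vanish p k h2 (by have := hp.two_le; omega), map_zero]
  -- expansion
  rw [pow_mul_expand x y p]
  have h2p : 2 ≤ p := hp.two_le
  have hsubset : ({1, p} : Finset ℕ) ⊆ range (p+1) := by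
    intro k hk
    simp only [mem_insert, mem_singleton] at hk
    rcases hk with rfl | rfl <;> simp only [mem_range] <;> omega
  have hzero : ∀ k ∈ range (p+1), k ∉ ({1, p} : Finset ℕ) → coeffs x dy p k * y^k = 0 := by
    intro k hk hnk
    simp only [mem_range] at hk
    simp only [mem_insert, mem_singleton] at hnk
    push_neg at hnk
    rcases Nat.eq_zero_or_pos k with rfl | hkpos
    · rw [coeffs_zero hdy0 hdy1 hp.pos, zero_mul]
    · rw [hvanish k (by omega) (by omega), zero_mul]
  rw [← Finset.sum_subset hsubset hzero,
    Finset.sum_pair (show (1:ℕ) ≠ p from by have := hp.two_le; omega)]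
  have hp1 : p - 1 + 1 = p := by have := hp.two_le; omega
  have hdiag : coeffs x dy p p = x ^ p := coeffs_diag hdy0 p
  have h1 : coeffs x dy p 1 = (fun b => x * dy b)^[p-1] x := by
    conv_lhs => rw [← hp1]
    rw [coeffs_one hdy0 hdy1]
  have had : ∀ k : ℕ, (fun b => (x*y)*b - b*(x*y))^[k] x = (fun b => x * dy b)^[k] x
      ∧ (fun b => x * dy b)^[k] x ∈ Zc := by
    intro k
    induction k with
    | zero => exact ⟨rfl, hxZ⟩
    | succ k ih =>
      obtain ⟨ihe, ihm⟩ := ih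
      constructor
      · rw [Function.iterate_succ_apply', Function.iterate_succ_apply', ihe]
        set b := (fun b => x * dy b)^[k] x with hb
        show (x*y)*b - b*(x*y) = x * dy b
        have hxb : x * b = b * x := hcomm' x hxZ b ihm
        have expand : (x*y)*b - b*(x*y) = x * dy b + (x*b - b*x) * y := by
          simp only [hdy]; noncomm_ring
        rw [expand, hxb, sub_self, zero_mul, add_zero]
      · rw [Function.iterate_succ_apply']
        exact mul_mem hxZ (hdyZ _ ihm)
  rw [h1, hdiag, ← (had (p-1)).1, pow_one]
  noncomm_ring
end

section
/- Let A be an associative (unital) ring in which p·1 = 0 for a prime p, and let x, y ∈ A. Then (x + y)^p − x^p − y^p lies in the Lie subring of A generated by x and y, i.e. in the smallest additive subgroup of A containing x and y that is closed under the commutator bracket [a,b] = a*b − b*a. -/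
open Finset Polynomial LinearMap

/-!
With `u = C x * X + C y ∈ A[X]`, the element `(x + y) ^ p - x ^ p - y ^ p` is the sum of the
middle coefficients `c k`, `0 < k < p`, of `u ^ p`. The derivative of `u ^ p` is
`∑ u ^ i * x * u ^ (p - 1 - i)`; since left and right multiplication by `u` commute and
`∑ L ^ i * R ^ (p - 1 - i) = (L - R) ^ (p - 1)` for commuting `L`, `R` in characteristic `p`,
this is `ad u ^ (p - 1)` applied to `C x`. As `X` is central, brackets of polynomials with
coefficients in `H` again have coefficients in `H`, so `k • c k ∈ H`; and `k` is a unit mod `p`.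
-/

theorem Commute.geom_sum₂_add_left_eq_sum_choose {R : Type*} [Ring R] {y d : R}
    (h : Commute y d) (n : ℕ) :
    ∑ i ∈ range n, (y + d) ^ i * y ^ (n - 1 - i) =
      ∑ k ∈ range n, d ^ k * y ^ (n - 1 - k) * (n.choose (k + 1) : R) := by
  induction n with
  | zero => simp
  | succ n ih =>
    have hshift : ∑ k ∈ range (n + 1), d ^ k * y ^ (n - k) * (n.choose (k + 1) : R) =
        y * ∑ k ∈ range n, d ^ k * y ^ (n - 1 - k) * (n.choose (k + 1) : R) := by
      rw [sum_range_succ, Nat.choose_succ_self, Nat.cast_zero, mul_zero, add_zero, mul_sum]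
      refine sum_congr rfl fun k hk => ?_
      have hnk : n - k = n - 1 - k + 1 := by have := mem_range.mp hk; omega
      rw [hnk, pow_succ', ← mul_assoc, ← (h.pow_right k).eq, mul_assoc y, mul_assoc y]
    simp only [Nat.add_sub_cancel]
    rw [((Commute.refl y).add_left h.symm).geom_sum₂_succ_eq, ih, ← hshift, add_comm y d,
      h.symm.add_pow]
    simp only [Nat.choose_succ_succ', Nat.cast_add, mul_add, sum_add_distrib]

theorem Commute.geom_sum₂_eq_sub_pow_pred {R : Type*} [Ring R] {p : ℕ} (hp : p.Prime)
    (hR : (p : R) = 0) {x y : R} (h : Commute x y) :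
    ∑ i ∈ range p, x ^ i * y ^ (p - 1 - i) = (x - y) ^ (p - 1) := by
  obtain ⟨n, rfl⟩ := Nat.exists_eq_add_one_of_ne_zero hp.ne_zero
  have hyd : Commute y (x - y) := h.symm.sub_right (Commute.refl y)
  rw [← add_sub_cancel y x, add_sub_assoc, hyd.geom_sum₂_add_left_eq_sum_choose, sum_range_succ,
    sum_eq_zero, zero_add]
  · simp
  · intro k hk
    obtain ⟨c, hc⟩ := hp.dvd_choose_self k.succ_ne_zero (by simpa using hk)
    rw [hc, Nat.cast_mul, hR, zero_mul, mul_zero]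

theorem AddSubgroup.mem_of_nsmul_mem_of_coprime {G : Type*} [AddGroup G] (H : AddSubgroup G)
    {p k : ℕ} {a : G} (ha : p • a = 0) (hk : k.Coprime p) (h : k • a ∈ H) : a ∈ H := by
  obtain ⟨u, v, huv⟩ := Nat.isCoprime_iff_coprime.mpr hk
  have : a = u • k • a := calc
    a = (u * k + v * p : ℤ) • a := by rw [huv, one_zsmul]
    _ = u • k • a := by
      rw [add_zsmul, mul_zsmul, mul_zsmul, natCast_zsmul, natCast_zsmul, ha, zsmul_zero, add_zero]
  rw [this]
  exact zsmul_mem h u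

namespace Polynomial

variable {A : Type*} [Ring A]

theorem derivative_pow_eq_geom_sum₂_apply (f : A[X]) (n : ℕ) :
    derivative (f ^ n) =
      (∑ i ∈ range n, mulLeft ℤ f ^ i * mulRight ℤ f ^ (n - 1 - i)) (derivative f) := by
  induction n with
  | zero => simp
  | succ n ih =>
    rw [Nat.add_sub_cancel, Commute.geom_sum₂_succ_eq (commute_mulLeft_right f f), pow_succ,
      derivative_mul, ih, LinearMap.add_apply, Module.End.mul_apply, pow_mulLeft, mulLeft_apply,
      mulRight_apply, add_comm]

theorem derivative_pow_char {p : ℕ} (hp : p.Prime) (hA : (p : A) = 0) (f : A[X]) :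
    derivative (f ^ p) = ((mulLeft ℤ f - mulRight ℤ f) ^ (p - 1)) (derivative f) := by
  have hEnd : (p : Module.End ℤ A[X]) = 0 := by
    ext g : 1
    rw [Module.End.natCast_apply, nsmul_eq_mul, ← C_eq_natCast, hA, C_0, zero_mul,
      LinearMap.zero_apply]
  rw [derivative_pow_eq_geom_sum₂_apply,
    Commute.geom_sum₂_eq_sub_pow_pred hp hEnd (commute_mulLeft_right f f)]

theorem coeff_mul_sub_mul_mem {H : AddSubgroup A}
    (hH : ∀ a ∈ H, ∀ b ∈ H, a * b - b * a ∈ H) {f g : A[X]}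
    (hf : ∀ n, f.coeff n ∈ H) (hg : ∀ n, g.coeff n ∈ H) (n : ℕ) :
    (f * g - g * f).coeff n ∈ H := by
  rw [coeff_sub, coeff_mul, coeff_mul, ← Nat.sum_antidiagonal_swap, ← sum_sub_distrib]
  exact sum_mem fun ij _ => hH _ (hf _) _ (hg _)

theorem coeff_ad_pow_mem {H : AddSubgroup A}
    (hH : ∀ a ∈ H, ∀ b ∈ H, a * b - b * a ∈ H) {f g : A[X]}
    (hf : ∀ n, f.coeff n ∈ H) (hg : ∀ n, g.coeff n ∈ H) (k n : ℕ) :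
    (((mulLeft ℤ f - mulRight ℤ f) ^ k) g).coeff n ∈ H := by
  induction k generalizing n with
  | zero => exact hg n
  | succ k ih =>
    rw [pow_succ', Module.End.mul_apply, LinearMap.sub_apply, mulLeft_apply, mulRight_apply]
    exact coeff_mul_sub_mul_mem hH hf ih n

theorem add_pow_sub_pow_sub_pow_eq_sum_coeff (x y : A) (n : ℕ) :
    (x + y) ^ (n + 1) - x ^ (n + 1) - y ^ (n + 1) =
      ∑ i ∈ range n, ((C x * X + C y) ^ (n + 1)).coeff (i + 1) := by
  set f := (C x * X + C y) ^ (n + 1)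
  have hdeg : f.natDegree < n + 2 :=
    (natDegree_pow_le_of_le (n + 1) natDegree_linear_le).trans_lt (by omega)
  have heval : (x + y) ^ (n + 1) = ∑ i ∈ range (n + 2), f.coeff i := by
    have h := map_pow (eval₂RingHom' (RingHom.id A) 1 fun a => Commute.one_right a)
      (C x * X + C y) (n + 1)
    simp only [eval₂RingHom'_apply, eval₂_add, eval₂_mul_X, eval₂_C, RingHom.id_apply,
      mul_one] at h
    rw [← h, ← eval, eval_eq_sum_range' hdeg]
    simp
  have htop : f.coeff (n + 1) = x ^ (n + 1) := by
    simpa using coeff_pow_of_natDegree_le (m := n + 1) (natDegree_linear_le (a := x) (b := y))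
  have hbot : f.coeff 0 = y ^ (n + 1) := by
    rw [← constantCoeff_apply, map_pow]
    simp
  rw [heval, sum_range_succ, sum_range_succ', htop, hbot]
  abel

theorem coeff_linear_pow_mem {p : ℕ} (hp : p.Prime)
    (hA : (p : A) = 0) {H : AddSubgroup A} (hH : ∀ a ∈ H, ∀ b ∈ H, a * b - b * a ∈ H)
    {x y : A} (hx : x ∈ H) (hy : y ∈ H) {k : ℕ} (hk : k ≠ 0) (hkp : k < p) :
    ((C x * X + C y) ^ p).coeff k ∈ H := by
  obtain ⟨n, rfl⟩ := Nat.exists_eq_add_one_of_ne_zero hk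
  have hlin : ∀ m, (C x * X + C y).coeff m ∈ H := by
    rintro (_ | _ | m) <;> simp [coeff_C, hx, hy]
  have hmul : (n + 1) • ((C x * X + C y) ^ p).coeff (n + 1) ∈ H := by
    rw [nsmul_eq_mul', Nat.cast_succ, ← coeff_derivative, derivative_pow_char hp hA]
    refine coeff_ad_pow_mem hH hlin (fun m => ?_) _ _
    simp only [derivative_add, derivative_C_mul_X, derivative_C, add_zero, coeff_C]
    split_ifs <;> simp [hx]
  refine H.mem_of_nsmul_mem_of_coprime ?_ (Nat.coprime_of_lt_prime hk hkp hp).symm hmul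
  rw [nsmul_eq_mul, hA, zero_mul]

end Polynomial

/-- **Jacobson's identity (weak form).** In an associative unital ring `A` of
characteristic `p` (`p` prime), `(x+y)^p - x^p - y^p` lies in the smallest additive
subgroup of `A` containing `x` and `y` that is closed under the commutator bracket
`[a,b] = a*b - b*a`, i.e. in the Lie subring generated by `x` and `y`. -/
theorem jacobson_identity_lie_element (A : Type*) [Ring A] (p : ℕ) (hp : p.Prime)
    (hchar : (p : A) = 0) (x y : A) :
    ∀ H : AddSubgroup A, x ∈ H → y ∈ H →
      (∀ a ∈ H, ∀ b ∈ H, a * b - b * a ∈ H) →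
      (x + y) ^ p - x ^ p - y ^ p ∈ H := by
  intro H hx hy hH
  obtain ⟨n, rfl⟩ := Nat.exists_eq_add_one_of_ne_zero hp.ne_zero
  rw [add_pow_sub_pow_sub_pow_eq_sum_coeff]
  exact sum_mem fun i hi =>
    coeff_linear_pow_mem hp hchar hH hx hy i.succ_ne_zero (by simpa using hi)
end

section
/- Let p be a prime, k a commutative ring with p·1 = 0, R a commutative k-algebra, ∂ : R → R a k-linear derivation, and r ∈ R. Let r∂ denote the derivation x ↦ r·∂(x). Then, as k-linear endomorphisms of R, (r∂)^p = r^p·∂^p + ((r∂)^{p−1}(r))·∂; that is, for every x ∈ R, (r∂)^p(x) = r^p·∂^p(x) + ((r∂)^{p−1}(r))·∂(x), where (r∂)^{p−1} is the (p−1)-fold composite of r∂ and powers denote composition. -/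
/-!
Write `(r∂)ⁿ = ∑ₖ cₙₖ ∂ᵏ`; the coefficients are universal differential polynomials in `r`, with
`cₚ₀ = 0`, `cₚₚ = rᵖ` and `cₚ₁ = (r∂)ᵖ⁻¹(r)`, so it suffices to show `cₚₖ = 0` for `1 < k < p` for
the derivation `Xᵢ ↦ Xᵢ₊₁` of `𝔽ₚ[X₀, X₁, …]`. Adjoin `u` with `∂u = 1` and a free `y`. In
characteristic `p` the operator `(r∂)ᵖ` is again a derivation, and comparing `(r∂)ᵖ(uy)` with
`u (r∂)ᵖ(y) + (r∂)ᵖ(u) y` gives `∑ₖ k cₚₖ ∂ᵏ⁻¹y = cₚ₁ y`. The `∂ᵏ⁻¹y` are independent variables,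
so `k cₚₖ = 0` for `1 < k < p`.
-/

open Finset MvPolynomial

namespace Derivation

section Leibniz

variable {A S : Type*} [CommSemiring A] [CommSemiring S] [Algebra A S] (D : Derivation A S S)

theorem iterate_apply_mul (n : ℕ) (a b : S) :
    D^[n] (a * b) = ∑ ij ∈ antidiagonal n, n.choose ij.1 • (D^[ij.1] a * D^[ij.2] b) := by
  induction n with
  | zero => simp
  | succ n ih =>
    rw [sum_antidiagonal_choose_succ_nsmul (fun i j => D^[i] a * D^[j] b) n]
    simp only [Function.iterate_succ_apply', ih, map_sum, map_nsmul, leibniz, smul_eq_mul,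
      smul_add, sum_add_distrib]
    congr 1
    refine sum_congr rfl fun ij hij => ?_
    rw [Nat.choose_symm_of_eq_add (mem_antidiagonal.1 hij).symm, mul_comm]

theorem iterate_prime_apply_mul (p : ℕ) [Fact p.Prime] [CharP S p] (a b : S) :
    D^[p] (a * b) = a * D^[p] b + b * D^[p] a := by
  have hp := (Fact.out : p.Prime).ne_zero
  rw [iterate_apply_mul, sum_eq_add_of_mem (0, p) (p, 0) (by simp) (by simp) (by simp; omega)]
  · simp [mul_comm]
  rintro ⟨i, j⟩ hij hne
  rw [HasAntidiagonal.mem_antidiagonal] at hij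
  have hdvd : p ∣ p.choose i :=
    (Fact.out : p.Prime).dvd_choose_self (by grind) (by grind)
  rw [nsmul_eq_mul, (CharP.cast_eq_zero_iff S p _).2 hdvd, zero_mul]

theorem iterate_add_two_apply_of_eq_one {u : S} (hu : D u = 1) (n : ℕ) : D^[n + 2] u = 0 := by
  rw [Function.iterate_add_apply, Function.iterate_succ_apply, hu, Function.iterate_one,
    D.map_one_eq_zero, Function.iterate_fixed D.map_zero]

theorem iterate_succ_apply_mul_of_eq_one {u : S} (hu : D u = 1) (n : ℕ) (y : S) :
    D^[n + 1] (u * y) = u * D^[n + 1] y + (n + 1) • D^[n] y := by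
  induction n with
  | zero => simp [leibniz, hu]
  | succ n ih =>
    rw [Function.iterate_succ_apply', ih, map_add, leibniz, map_nsmul, hu,
      ← Function.iterate_succ_apply' D, ← Function.iterate_succ_apply' D]
    simp only [smul_eq_mul, mul_one]
    ring

end Leibniz

section SmulIterate

variable {A S : Type*} [CommSemiring A] [CommSemiring S] [Algebra A S] (D : Derivation A S S)
  (r : S)

def smulIterateCoeff : ℕ → ℕ → S
  | 0, 0 => 1
  | 0, _ + 1 => 0
  | _ + 1, 0 => 0
  | n + 1, k + 1 => r * (D (smulIterateCoeff n (k + 1)) + smulIterateCoeff n k)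

theorem smulIterateCoeff_eq_zero_of_lt {n k : ℕ} (h : n < k) : smulIterateCoeff D r n k = 0 := by
  induction n generalizing k with
  | zero => obtain ⟨k, rfl⟩ := Nat.exists_eq_add_of_lt h; rfl
  | succ n ih =>
    obtain ⟨k, rfl⟩ := Nat.exists_eq_add_of_lt (Nat.zero_lt_of_lt h)
    simp [smulIterateCoeff, ih (k := k + 1) (by omega), ih (k := k) (by omega)]

theorem smulIterateCoeff_succ_zero (n : ℕ) : smulIterateCoeff D r (n + 1) 0 = 0 := rfl

theorem map_smulIterateCoeff_zero (n : ℕ) : D (smulIterateCoeff D r n 0) = 0 := by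
  cases n
  · exact D.map_one_eq_zero
  · exact D.map_zero

theorem smulIterateCoeff_self (n : ℕ) : smulIterateCoeff D r n n = r ^ n := by
  induction n with
  | zero => exact (pow_zero r).symm
  | succ n ih =>
    rw [smulIterateCoeff, smulIterateCoeff_eq_zero_of_lt D r n.lt_succ_self, ih, D.map_zero,
      zero_add, pow_succ']

theorem smulIterateCoeff_succ_one (n : ℕ) : smulIterateCoeff D r (n + 1) 1 = (r • D)^[n] r := by
  induction n with
  | zero => simp [smulIterateCoeff]
  | succ n ih =>
    rw [smulIterateCoeff, ih, smulIterateCoeff_succ_zero, add_zero,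
      Function.iterate_succ_apply']
    rfl

theorem iterate_smul_apply_eq_sum (n : ℕ) (x : S) :
    (r • D)^[n] x = ∑ k ∈ range (n + 1), smulIterateCoeff D r n k * D^[k] x := by
  induction n with
  | zero => simp [smulIterateCoeff]
  | succ n ih =>
    have hshift : ∑ k ∈ range (n + 1), D^[k] x * D (smulIterateCoeff D r n k) =
        ∑ k ∈ range (n + 1), D^[k + 1] x * D (smulIterateCoeff D r n (k + 1)) := by
      have h₁ := sum_range_succ (fun k => D^[k] x * D (smulIterateCoeff D r n k)) (n + 1)
      have h₂ := sum_range_succ' (fun k => D^[k] x * D (smulIterateCoeff D r n k)) (n + 1)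
      simp only [smulIterateCoeff_eq_zero_of_lt D r n.lt_succ_self, map_smulIterateCoeff_zero,
        D.map_zero, mul_zero, add_zero] at h₁ h₂
      rw [← h₁, h₂]
    rw [Function.iterate_succ_apply', ih, sum_range_succ' _ (n + 1), smulIterateCoeff_succ_zero,
      zero_mul, add_zero, smul_apply, map_sum, smul_eq_mul]
    simp only [leibniz, smul_eq_mul, mul_add, sum_add_distrib, hshift]
    rw [mul_sum, mul_sum, ← sum_add_distrib]
    refine sum_congr rfl fun k _ => ?_
    rw [smulIterateCoeff, Function.iterate_succ_apply']
    ring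

theorem iterate_smul_apply_of_smulIterateCoeff_eq_zero {p : ℕ} (hp : 1 < p)
    (hmid : ∀ k, 2 ≤ k → k < p → smulIterateCoeff D r p k = 0) (x : S) :
    (r • D)^[p] x = r ^ p * D^[p] x + (r • D)^[p - 1] r * D x := by
  obtain ⟨m, rfl⟩ : ∃ m, p = m + 1 := ⟨p - 1, by omega⟩
  rw [iterate_smul_apply_eq_sum, sum_eq_add_of_mem (m + 1) 1 (by simp) (by simp) (by omega),
    smulIterateCoeff_self, smulIterateCoeff_succ_one, Nat.add_sub_cancel, Function.iterate_one]
  intro k hk hne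
  rcases Nat.lt_or_ge k 2 with hk2 | hk2
  · obtain rfl : k = 0 := by omega
    rw [smulIterateCoeff_succ_zero, zero_mul]
  · rw [hmid k hk2 (by grind), zero_mul]

theorem map_smulIterateCoeff {A' S' : Type*} [CommSemiring A'] [CommSemiring S'] [Algebra A' S']
    {D' : Derivation A' S' S'} (f : S →+* S') (hf : ∀ x, f (D x) = D' (f x)) (n k : ℕ) :
    f (smulIterateCoeff D r n k) = smulIterateCoeff D' (f r) n k := by
  induction n generalizing k with
  | zero => cases k <;> simp [smulIterateCoeff]
  | succ n ih =>
    cases k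
    · exact map_zero f
    · simp only [smulIterateCoeff, map_mul, map_add, hf, ih]

end SmulIterate

section CommRing

variable {A S : Type*} [CommSemiring A] [CommRing S] [Algebra A S] (D : Derivation A S S)

theorem sum_succ_nsmul_smulIterateCoeff_mul_iterate {u : S} (hu : D u = 1) (r : S) (p : ℕ)
    [Fact p.Prime] [CharP S p] (y : S) :
    ∑ k ∈ range p, (k + 1) • (smulIterateCoeff D r p (k + 1) * D^[k] y) =
      smulIterateCoeff D r p 1 * y := by
  obtain ⟨m, rfl⟩ : ∃ m, p = m + 1 := ⟨p - 1, by have := (Fact.out : p.Prime).pos; omega⟩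
  have hu_p : (r • D)^[m + 1] u = smulIterateCoeff D r (m + 1) 1 := by
    rw [iterate_smul_apply_eq_sum, sum_eq_single 1]
    · simp [hu]
    · intro k _ hk
      rcases k with _ | _ | k
      · rw [smulIterateCoeff_succ_zero, zero_mul]
      · exact absurd rfl hk
      · rw [iterate_add_two_apply_of_eq_one D hu, mul_zero]
    · simp
  have hleib := (r • D).iterate_prime_apply_mul (m + 1) u y
  rw [hu_p, iterate_smul_apply_eq_sum, iterate_smul_apply_eq_sum,
    sum_range_succ' (fun k => smulIterateCoeff D r (m + 1) k * D^[k] (u * y)),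
    sum_range_succ' (fun k => smulIterateCoeff D r (m + 1) k * D^[k] y),
    smulIterateCoeff_succ_zero] at hleib
  simp only [iterate_succ_apply_mul_of_eq_one D hu, zero_mul, add_zero] at hleib
  calc ∑ k ∈ range (m + 1), (k + 1) • (smulIterateCoeff D r (m + 1) (k + 1) * D^[k] y)
      = ∑ k ∈ range (m + 1), smulIterateCoeff D r (m + 1) (k + 1) *
            (u * D^[k + 1] y + (k + 1) • D^[k] y) -
          u * ∑ k ∈ range (m + 1), smulIterateCoeff D r (m + 1) (k + 1) * D^[k + 1] y := by
        rw [mul_sum, ← sum_sub_distrib]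
        refine sum_congr rfl fun k _ => ?_
        ring
    _ = smulIterateCoeff D r (m + 1) 1 * y := by rw [hleib]; ring

end CommRing

end Derivation

theorem MvPolynomial.map_mkDerivation_apply {σ A B S : Type*} [CommSemiring A] [CommSemiring B]
    [CommSemiring S] [Algebra B S] (f : MvPolynomial σ A →+* S) (D : Derivation B S S)
    {δ : σ → MvPolynomial σ A} (hC : ∀ a, D (f (C a)) = 0) (hX : ∀ i, f (δ i) = D (f (X i)))
    (q : MvPolynomial σ A) : f (mkDerivation A δ q) = D (f q) := by
  induction q using MvPolynomial.induction_on with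
  | C a => rw [derivation_C, map_zero, hC]
  | add q₁ q₂ h₁ h₂ => rw [map_add, map_add, map_add, h₁, h₂, map_add]
  | mul_X q i h =>
    rw [Derivation.leibniz, mkDerivation_X, map_add, smul_eq_mul, smul_eq_mul, map_mul, map_mul,
      map_mul, h, hX, Derivation.leibniz, smul_eq_mul, smul_eq_mul]

namespace Hochschild

variable (p : ℕ)

/-- `X i` stands for `∂ⁱ r`. -/
noncomputable def diffD :
    Derivation (ZMod p) (MvPolynomial ℕ (ZMod p)) (MvPolynomial ℕ (ZMod p)) :=
  mkDerivation _ fun i => X (i + 1)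

/-- `coeff i` stands for `∂ⁱ r`, `unit` for an element `u` with `∂ u = 1`, and `test i` for `∂ⁱ y`,
`y` a free element. -/
inductive TestVar
  | coeff (i : ℕ)
  | unit
  | test (i : ℕ)

noncomputable def testD :
    Derivation (ZMod p) (MvPolynomial TestVar (ZMod p)) (MvPolynomial TestVar (ZMod p)) :=
  mkDerivation _ fun
    | .coeff i => X (.coeff (i + 1))
    | .unit => 1
    | .test i => X (.test (i + 1))

theorem testD_iterate_X_test (n : ℕ) : (testD p)^[n] (X (.test 0)) = X (.test n) := by
  induction n with
  | zero => rfl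
  | succ n ih => rw [Function.iterate_succ_apply', ih, testD, mkDerivation_X]

theorem rename_smulIterateCoeff_diffD (n k : ℕ) :
    rename TestVar.coeff (Derivation.smulIterateCoeff (diffD p) (X 0) n k) =
      Derivation.smulIterateCoeff (testD p) (X (.coeff 0)) n k := by
  refine (Derivation.map_smulIterateCoeff (diffD p) (X 0)
    (rename (R := ZMod p) TestVar.coeff).toRingHom
    (MvPolynomial.map_mkDerivation_apply _ (testD p) (fun a => ?_) (fun i => ?_)) n k).trans ?_
  · simp
  · simp [testD, mkDerivation_X]
  · simp

theorem smulIterateCoeff_diffD_eq_zero [Fact p.Prime] {k : ℕ} (h2 : 2 ≤ k) (hk : k < p) :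
    Derivation.smulIterateCoeff (diffD p) (X 0) p k = 0 := by
  obtain ⟨j, rfl⟩ : ∃ j, k = j + 1 := ⟨k - 1, by omega⟩
  have key := (testD p).sum_succ_nsmul_smulIterateCoeff_mul_iterate
    (u := X .unit) (by simp [testD, mkDerivation_X]) (X (.coeff 0)) p (X (.test 0))
  simp only [testD_iterate_X_test, ← rename_smulIterateCoeff_diffD] at key
  let π : MvPolynomial TestVar (ZMod p) →ₐ[ZMod p] MvPolynomial ℕ (ZMod p) := aeval fun
    | .coeff i => X i
    | .unit => 0
    | .test i => if i = j then 1 else 0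
  have hπ (q : MvPolynomial ℕ (ZMod p)) : π (rename TestVar.coeff q) = q := by
    rw [aeval_rename]
    exact aeval_X_left_apply q
  have := congrArg π key
  simp only [map_sum, map_nsmul, map_mul, hπ] at this
  rw [sum_eq_single j] at this
  · have hne : ((j + 1 : ℕ) : ZMod p) ≠ 0 := by
      rw [Ne, ZMod.natCast_eq_zero_iff]
      exact fun h => absurd (Nat.le_of_dvd j.succ_pos h) (by omega)
    rw [show π (X (.test j)) = 1 by simp [π], show π (X (.test 0)) = 0 by simp [π]; omega,
      mul_one, mul_zero, ← Nat.cast_smul_eq_nsmul (ZMod p)] at this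
    exact (smul_eq_zero.mp this).resolve_left hne
  · intro i _ hij
    simp [π, hij]
  · simp; omega

end Hochschild

/-- **Hochschild's formula for derivations.** In characteristic `p`, for a `k`-linear
derivation `∂` of a commutative `k`-algebra `R` and `r ∈ R`, one has
`(r∂)^p = r^p·∂^p + ((r∂)^{p−1}(r))·∂` as `k`-linear endomorphisms of `R`. -/
theorem smul_derivation_pow_p (p : ℕ) (hp : p.Prime)
    (k : Type*) [CommRing k] (R : Type*) [CommRing R] [Algebra k R]
    (hchar : (p : k) = 0) (D : R →ₗ[k] R)
    (hD : ∀ a b : R, D (a * b) = a * D b + D a * b) (r : R) :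
    ∀ x : R, (fun a => r * D a)^[p] x =
      r ^ p * (⇑D)^[p] x + (fun a => r * D a)^[p - 1] r * D x := by
  have : Fact p.Prime := ⟨hp⟩
  let δ : Derivation k R R := Derivation.mk' D fun a b => by
    rw [hD, smul_eq_mul, smul_eq_mul, mul_comm (D a)]
  have hpR : (p : R) = 0 := by rw [← map_natCast (algebraMap k R), hchar, map_zero]
  let f : MvPolynomial ℕ (ZMod p) →+* R :=
    eval₂Hom (ZMod.castHom (ringChar.dvd hpR) R) fun i => δ^[i] r
  have hf (q : MvPolynomial ℕ (ZMod p)) : f (Hochschild.diffD p q) = δ (f q) := by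
    refine MvPolynomial.map_mkDerivation_apply f δ (fun c => ?_) (fun i => ?_) q
    · simp only [f, eval₂Hom_C, ZMod.castHom_apply, ZMod.cast_eq_val, δ.map_natCast]
    · simp [f, Function.iterate_succ_apply']
  have hmid (j : ℕ) (h2 : 2 ≤ j) (hj : j < p) : δ.smulIterateCoeff r p j = 0 := by
    simpa [Hochschild.smulIterateCoeff_diffD_eq_zero p h2 hj, f] using
      ((Hochschild.diffD p).map_smulIterateCoeff (X 0) f hf p j).symm
  exact δ.iterate_smul_apply_of_smulIterateCoeff_eq_zero r hp.one_lt hmid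
end

section
/- Let p be a prime, k a commutative ring with p·1 = 0, R a commutative k-algebra, and M an R-module. Let ∇ be a flat connection on M: an R-linear map ∂ ↦ ∇_∂ from Der_k(R) to the k-linear endomorphisms of M satisfying ∇_∂(r·m) = ∂(r)·m + r·∇_∂(m) and ∇_{[∂,∂']} = ∇_∂ ∘ ∇_{∂'} − ∇_{∂'} ∘ ∇_∂. Define the p-curvature ψ(∂) := (∇_∂)^p − ∇_{∂^p}. Then the p-curvature is horizontal and its values commute: for all ∂, ∂' ∈ Der_k(R), ψ(∂) ∘ ∇_{∂'} = ∇_{∂'} ∘ ψ(∂), and consequently ψ(∂) ∘ ψ(∂') = ψ(∂') ∘ ψ(∂). -/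
/-!
Write `ad x = ⁅x, ·⁆`. In characteristic `p` left and right multiplication by `a` commute, so
`(ad a)^p = (mulLeft a - mulRight a)^p = mulLeft (a^p) - mulRight (a^p) = ad (a^p)`. Applied to
`End_k(R)` this gives `(ad ∂)^p ∂' = ⁅∂^p, ∂'⁆`; applied to `End_k(M)`, together with flatness
(`∇` intertwines the brackets, hence the iterated brackets), it gives
`⁅∇_{∂^p}, ∇_{∂'}⁆ = ∇_{(ad ∂)^p ∂'} = (ad ∇_∂)^p ∇_{∂'} = ⁅(∇_∂)^p, ∇_{∂'}⁆`,
i.e. `ψ(∂)` commutes with `∇_{∂'}`. Then `ψ(∂)` commutes with `(∇_{∂'})^p` and `∇_{∂'^p}`,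
hence with `ψ(∂')`.
-/

theorem sub_pow_prime_of_commute {A : Type*} [Ring A] {p : ℕ} (hp : p.Prime)
    (hpA : (p : A) = 0) {a b : A} (h : Commute a b) : (a - b) ^ p = a ^ p - b ^ p := by
  cases subsingleton_or_nontrivial A
  · exact Subsingleton.elim _ _
  have := Fact.mk hp
  have := (CharP.charP_iff_prime_eq_zero hp).mpr hpA
  exact sub_pow_char_of_commute (p := p) (h := h)

theorem iterate_lie_prime {k A : Type*} [CommRing k] [Ring A] [Algebra k A] {p : ℕ}
    (hp : p.Prime) (hchar : (p : k) = 0) (a b : A) :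
    (fun x => ⁅a, x⁆)^[p] b = ⁅a ^ p, b⁆ := by
  have hpEnd : (p : Module.End k A) = 0 := by
    rw [← map_natCast (algebraMap k _), hchar, map_zero]
  have ad_eq (c : A) : ⇑(LinearMap.mulLeft k c - LinearMap.mulRight k c) = fun x => ⁅c, x⁆ := by
    ext x
    simp [Ring.lie_def]
  have hpow : (LinearMap.mulLeft k a - LinearMap.mulRight k a) ^ p =
      LinearMap.mulLeft k (a ^ p) - LinearMap.mulRight k (a ^ p) := by
    rw [sub_pow_prime_of_commute hp hpEnd (LinearMap.commute_mulLeft_right a a),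
      LinearMap.pow_mulLeft, LinearMap.pow_mulRight]
  have := LinearMap.congr_fun hpow b
  rwa [Module.End.pow_apply, ad_eq, ad_eq] at this

theorem apply_iterate_lie_of_map_lie {L L' : Type*} [Bracket L L] [Bracket L' L'] (f : L → L')
    (hf : ∀ x y, f ⁅x, y⁆ = ⁅f x, f y⁆) (x : L) (n : ℕ) (y : L) :
    f ((fun z => ⁅x, z⁆)^[n] y) = (fun z => ⁅f x, z⁆)^[n] (f y) :=
  (Function.Semiconj.iterate_right (hf x) n) y

theorem Derivation.iterate_lie_prime {k R : Type*} [CommRing k] [CommRing R] [Algebra k R]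
    {p : ℕ} (hp : p.Prime) (hchar : (p : k) = 0) (D D' Dp : Derivation k R R)
    (hDp : ∀ x, Dp x = (⇑D)^[p] x) :
    (fun E => ⁅D, E⁆)^[p] D' = ⁅Dp, D'⁆ := by
  have hDpEnd : (Dp : Module.End k R) = (D : Module.End k R) ^ p := by
    ext x
    rw [Module.End.pow_apply]
    exact hDp x
  have h : (((fun E => ⁅D, E⁆)^[p] D' : Derivation k R R) : Module.End k R) = ⁅Dp, D'⁆ := by
    rw [apply_iterate_lie_of_map_lie _ (fun _ _ => commutator_coe_linear_map) D p D',
      _root_.iterate_lie_prime hp hchar, commutator_coe_linear_map, hDpEnd]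
  exact Derivation.ext (LinearMap.congr_fun h)

theorem pCurvature_horizontal_and_commute_general (p : ℕ) (hp : p.Prime)
    (k : Type*) [CommRing k] (R : Type*) [CommRing R] [Algebra k R]
    (hchar : (p : k) = 0)
    (M : Type*) [AddCommGroup M] [Module k M]
    (nabla : Derivation k R R → Module.End k M)
    (hflat : ∀ D D' : Derivation k R R,
      nabla ⁅D, D'⁆ = nabla D * nabla D' - nabla D' * nabla D)
    (Dpow : Derivation k R R → Derivation k R R)
    (hDpow : ∀ (D : Derivation k R R) (x : R), Dpow D x = (⇑D)^[p] x) :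
    (∀ D D' : Derivation k R R,
        (nabla D ^ p - nabla (Dpow D)) * nabla D' =
          nabla D' * (nabla D ^ p - nabla (Dpow D))) ∧
    (∀ D D' : Derivation k R R,
        (nabla D ^ p - nabla (Dpow D)) * (nabla D' ^ p - nabla (Dpow D')) =
          (nabla D' ^ p - nabla (Dpow D')) * (nabla D ^ p - nabla (Dpow D))) := by
  have nabla_lie (D D' : Derivation k R R) : nabla ⁅D, D'⁆ = ⁅nabla D, nabla D'⁆ :=
    (hflat D D').trans (Ring.lie_def _ _).symm
  have horizontal (D D' : Derivation k R R) :
      Commute (nabla D ^ p - nabla (Dpow D)) (nabla D') := by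
    have h : ⁅nabla (Dpow D), nabla D'⁆ = ⁅nabla D ^ p, nabla D'⁆ := calc
      ⁅nabla (Dpow D), nabla D'⁆ = nabla ((fun E => ⁅D, E⁆)^[p] D') := by
        rw [Derivation.iterate_lie_prime hp hchar D D' (Dpow D) (hDpow D), nabla_lie]
      _ = (fun X => ⁅nabla D, X⁆)^[p] (nabla D') := apply_iterate_lie_of_map_lie _ nabla_lie D p D'
      _ = ⁅nabla D ^ p, nabla D'⁆ := iterate_lie_prime hp hchar _ _
    rw [commute_iff_lie_eq, Ring.lie_def, sub_mul, mul_sub, sub_sub_sub_comm, ← Ring.lie_def,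
      ← Ring.lie_def, h, sub_self]
  refine ⟨fun D D' => (horizontal D D').eq, fun D D' => ?_⟩
  exact (((horizontal D D').pow_right p).sub_right (horizontal D (Dpow D'))).eq

/-- The `p`-curvature `ψ(∂) = (∇_∂)^p − ∇_{∂^p}` of a flat connection `∇` on an `R`-module
`M` (in characteristic `p`) is horizontal: it commutes with all the operators `∇_{∂'}`,
and consequently its values pairwise commute. -/
theorem pCurvature_horizontal_and_commute (p : ℕ) (hp : p.Prime)
    (k : Type*) [CommRing k] (R : Type*) [CommRing R] [Algebra k R]
    (hchar : (p : k) = 0)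
    (M : Type*) [AddCommGroup M] [Module k M] [Module R M] [IsScalarTower k R M]
    (nabla : Derivation k R R → Module.End k M)
    (hadd : ∀ D D' : Derivation k R R, nabla (D + D') = nabla D + nabla D')
    (hsmul : ∀ (r : R) (D : Derivation k R R) (m : M), nabla (r • D) m = r • nabla D m)
    (hLeib : ∀ (D : Derivation k R R) (r : R) (m : M),
      nabla D (r • m) = D r • m + r • nabla D m)
    (hflat : ∀ D D' : Derivation k R R,
      nabla ⁅D, D'⁆ = nabla D * nabla D' - nabla D' * nabla D)
    (Dpow : Derivation k R R → Derivation k R R)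
    (hDpow : ∀ (D : Derivation k R R) (x : R), Dpow D x = (⇑D)^[p] x) :
    (∀ D D' : Derivation k R R,
        (nabla D ^ p - nabla (Dpow D)) * nabla D' =
          nabla D' * (nabla D ^ p - nabla (Dpow D))) ∧
    (∀ D D' : Derivation k R R,
        (nabla D ^ p - nabla (Dpow D)) * (nabla D' ^ p - nabla (Dpow D')) =
          (nabla D' ^ p - nabla (Dpow D')) * (nabla D ^ p - nabla (Dpow D))) :=
  pCurvature_horizontal_and_commute_general p hp k R hchar M nabla hflat Dpow hDpow
end

section
/- Let p be a prime and k a commutative ring with p·1 = 0, and let W = W_d(k) be the d-th Weyl algebra over k (d ≥ 1). Then the center Z of W equals the k-subalgebra of W generated by the elements t_1^p, …, t_d^p, ∂_1^p, …, ∂_d^p, and W is a free Z-module of rank p^{2d}: the monomials t^I·∂^J = t_1^{i_1}⋯t_d^{i_d}·∂_1^{j_1}⋯∂_d^{j_d}, where all exponents i_r, j_r range over {0, 1, …, p−1}, form a Z-basis of W. -/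
/-!
The action of the Weyl algebra on `k[x, y]` by `t_i ↦ x_i`, `∂_i ↦ ∂/∂x_i + y_i` sends
`t^I ∂^J` to `x^I y^J` when applied to `1`. So the symbol `w ↦ w · 1` identifies the Weyl
algebra with `k[x, y]` as a `k`-module (the monomials `t^I ∂^J` form a `k`-basis), and under
it the commutators `[∂_i, -]` and `[-, t_i]` become `∂/∂x_i` and `∂/∂y_i`. A central element
therefore has a symbol whose partial derivatives all vanish, which in characteristic `p` means
that only exponents divisible by `p` occur: the centre is spanned by the monomials
`t^{pA} ∂^{pB}`, which are products of the central elements `t_i^p`, `∂_i^p`. Finally, division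
with remainder of the exponents writes every basis monomial uniquely as `t^{pA} ∂^{pB} · t^I ∂^J`
with `I, J < p`, so the `t^I ∂^J` with `I, J < p` form a basis over the centre.
-/

noncomputable section

/-- The defining relations of the `d`-th Weyl algebra: `t_i t_j = t_j t_i`,
`∂_i ∂_j = ∂_j ∂_i` and `∂_i t_j = t_j ∂_i + δ_{ij}`. -/
inductive WeylRel (k : Type*) [CommRing k] (d : ℕ) :
    FreeAlgebra k (Fin d ⊕ Fin d) → FreeAlgebra k (Fin d ⊕ Fin d) → Prop
  | tt (i j : Fin d) :
      WeylRel k d (FreeAlgebra.ι k (Sum.inl i) * FreeAlgebra.ι k (Sum.inl j))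
        (FreeAlgebra.ι k (Sum.inl j) * FreeAlgebra.ι k (Sum.inl i))
  | dd (i j : Fin d) :
      WeylRel k d (FreeAlgebra.ι k (Sum.inr i) * FreeAlgebra.ι k (Sum.inr j))
        (FreeAlgebra.ι k (Sum.inr j) * FreeAlgebra.ι k (Sum.inr i))
  | dt (i j : Fin d) :
      WeylRel k d (FreeAlgebra.ι k (Sum.inr i) * FreeAlgebra.ι k (Sum.inl j))
        (FreeAlgebra.ι k (Sum.inl j) * FreeAlgebra.ι k (Sum.inr i) + if i = j then 1 else 0)

/-- The `d`-th Weyl algebra over `k`: the free algebra on `t_1,…,t_d,∂_1,…,∂_d` modulo the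
two-sided ideal generated by the Weyl relations. -/
abbrev WeylAlgebra (k : Type*) [CommRing k] (d : ℕ) := RingQuot (WeylRel k d)

namespace WeylAlgebra

variable (k : Type*) [CommRing k] (d : ℕ)

/-- The generator `t_i` of the Weyl algebra. -/
def t (i : Fin d) : WeylAlgebra k d :=
  RingQuot.mkAlgHom k (WeylRel k d) (FreeAlgebra.ι k (Sum.inl i))

/-- The generator `∂_i` of the Weyl algebra. -/
def del (i : Fin d) : WeylAlgebra k d :=
  RingQuot.mkAlgHom k (WeylRel k d) (FreeAlgebra.ι k (Sum.inr i))

/-- The monomial `t^I = t_1^{i_1} ⋯ t_d^{i_d}` in the Weyl algebra. -/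
def monomialT (I : Fin d → ℕ) : WeylAlgebra k d :=
  ((List.finRange d).map fun i => t k d i ^ I i).prod

/-- The monomial `∂^J = ∂_1^{j_1} ⋯ ∂_d^{j_d}` in the Weyl algebra. -/
def monomialD (J : Fin d → ℕ) : WeylAlgebra k d :=
  ((List.finRange d).map fun i => del k d i ^ J i).prod

end WeylAlgebra

section SMulTower

open Finsupp Submodule

variable {R S M α α' : Type*} [Semiring R] [Semiring S] [AddCommMonoid M] [Module R M]
  [Module R S] [Module S M] [IsScalarTower R S M] {v : α → M} {w : α' → S}

theorem LinearIndependent.of_smul_of_span_eq_top (hw : span R (Set.range w) = ⊤)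
    (h : LinearIndependent R fun i : α × α' => w i.2 • v i.1) : LinearIndependent S v := by
  rw [LinearIndependent, linearCombination_smul] at h
  refine Function.Injective.of_comp_right h ((mapRange_surjective _ (map_zero _) ?_).comp
    (curryLinearEquiv R).surjective)
  rw [← LinearMap.range_eq_top, range_linearCombination, hw]

theorem Submodule.span_eq_top_of_span_smul_eq_top
    (h : span R (Set.range fun i : α × α' => w i.2 • v i.1) = ⊤) :
    span S (Set.range v) = ⊤ := by
  have hle : span R (Set.range fun i : α × α' => w i.2 • v i.1) ≤
      (span S (Set.range v)).restrictScalars R :=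
    span_le.mpr <| Set.range_subset_iff.mpr fun i =>
      smul_mem _ _ (subset_span (Set.mem_range_self i.1))
  exact eq_top_iff.mpr fun x _ => hle (h.symm ▸ mem_top : x ∈ span R _)

end SMulTower

section CommutatorPow

variable {R : Type*} [Ring R]

theorem mul_pow_sub_pow_mul_of_mul_sub_mul_eq_one {a b : R} (h : a * b - b * a = 1) (n : ℕ) :
    a * b ^ n - b ^ n * a = n * b ^ (n - 1) := by
  induction n with
  | zero => simp
  | succ n ih =>
    calc a * b ^ (n + 1) - b ^ (n + 1) * a
        = (a * b ^ n - b ^ n * a) * b + b ^ n * (a * b - b * a) := by noncomm_ring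
      _ = (n + 1 : ℕ) * b ^ n := by
        rw [ih, h, mul_one, mul_assoc]
        rcases n with _ | n
        · simp
        · rw [Nat.add_sub_cancel, ← pow_succ, Nat.cast_succ (n + 1), add_one_mul]

theorem pow_mul_sub_mul_pow_of_mul_sub_mul_eq_one {a b : R} (h : a * b - b * a = 1) (n : ℕ) :
    a ^ n * b - b * a ^ n = n * a ^ (n - 1) := by
  have := mul_pow_sub_pow_mul_of_mul_sub_mul_eq_one (a := -b) (b := a)
    (by rw [neg_mul, mul_neg, sub_neg_eq_add, neg_add_eq_sub, h]) n
  rwa [neg_mul, mul_neg, sub_neg_eq_add, neg_add_eq_sub] at this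

end CommutatorPow

section OrderedMonomial

variable {M : Type*} [Monoid M] {d : ℕ}

def orderedMonomial (f : Fin d → M) (I : Fin d → ℕ) : M :=
  ((List.finRange d).map fun i => f i ^ I i).prod

variable {f : Fin d → M}

theorem orderedMonomial_zero : orderedMonomial f 0 = 1 :=
  List.prod_eq_one fun _ hx => by
    obtain ⟨i, -, rfl⟩ := List.mem_map.mp hx
    exact pow_zero _

theorem map_orderedMonomial {N F : Type*} [Monoid N] [FunLike F M N] [MonoidHomClass F M N]
    (φ : F) (I : Fin d → ℕ) : φ (orderedMonomial f I) = orderedMonomial (φ ∘ f) I := by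
  simp [orderedMonomial, map_list_prod, Function.comp_def]

theorem orderedMonomial_eq_prod {M : Type*} [CommMonoid M] (f : Fin d → M) (I : Fin d → ℕ) :
    orderedMonomial f I = ∏ i, f i ^ I i :=
  (Fin.prod_univ_def _).symm

theorem Commute.orderedMonomial_right {a : M} {I : Fin d → ℕ}
    (h : ∀ i, Commute a (f i ^ I i)) : Commute a (orderedMonomial f I) :=
  Commute.list_prod_right _ _ fun _ hx => by
    obtain ⟨i, -, rfl⟩ := List.mem_map.mp hx
    exact h i

theorem orderedMonomial_nsmul (n : ℕ) (I : Fin d → ℕ) :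
    orderedMonomial f (n • I) = orderedMonomial (fun i => f i ^ n) I := by
  simp [orderedMonomial, pow_mul]

theorem orderedMonomial_mem {S : Type*} [SetLike S M] [SubmonoidClass S M] {s : S}
    (h : ∀ i, f i ∈ s) (I : Fin d → ℕ) : orderedMonomial f I ∈ s :=
  list_prod_mem fun _ hx => by
    obtain ⟨i, -, rfl⟩ := List.mem_map.mp hx
    exact pow_mem (h i) _

theorem orderedMonomial_single (i : Fin d) (n : ℕ) :
    orderedMonomial f (Pi.single i n) = f i ^ n := by
  classical
  rw [orderedMonomial, List.prod_map_eq_pow_single i _ fun j hj _ => by simp [hj],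
    List.count_eq_one_of_mem (List.nodup_finRange d) (List.mem_finRange i), pow_one,
    Pi.single_eq_same]

variable (hf : ∀ i j, Commute (f i) (f j))
include hf

theorem orderedMonomial_add (I J : Fin d → ℕ) :
    orderedMonomial f (I + J) = orderedMonomial f I * orderedMonomial f J := by
  unfold orderedMonomial
  induction List.finRange d with
  | nil => simp
  | cons a l ih =>
    simp only [List.map_cons, List.prod_cons]
    rw [ih, Pi.add_apply, pow_add]
    have : Commute (f a ^ J a) ((l.map fun i => f i ^ I i).prod) :=
      Commute.list_prod_right _ _ fun _ hx => by
        obtain ⟨i, -, rfl⟩ := List.mem_map.mp hx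
        exact (hf a i).pow_pow _ _
    simp only [mul_assoc]
    rw [← mul_assoc (f a ^ J a), this.eq, mul_assoc]

theorem orderedMonomial_eq_pow_mul_update (I : Fin d → ℕ) (i : Fin d) :
    orderedMonomial f I = f i ^ I i * orderedMonomial f (Function.update I i 0) := by
  have hI : I = Pi.single i (I i) + Function.update I i 0 := by
    ext j
    by_cases hj : j = i
    · subst hj; simp
    · simp [hj]
  conv_lhs => rw [hI]
  rw [orderedMonomial_add hf, orderedMonomial_single]

theorem orderedMonomial_add_single (I : Fin d → ℕ) (i : Fin d) :
    orderedMonomial f (I + Pi.single i 1) = orderedMonomial f I * f i := by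
  rw [orderedMonomial_add hf, orderedMonomial_single, pow_one]

end OrderedMonomial

section OrderedMonomialCommutator

variable {R : Type*} [Ring R] {d : ℕ} {f : Fin d → R} (hf : ∀ i j, Commute (f i) (f j))
  {a : R} {i : Fin d} (ha : ∀ j ≠ i, Commute a (f j))
include hf ha

theorem mul_orderedMonomial_sub_orderedMonomial_mul (hai : a * f i - f i * a = 1)
    (I : Fin d → ℕ) :
    a * orderedMonomial f I - orderedMonomial f I * a =
      I i * orderedMonomial f (I - Pi.single i 1) := by
  have hG : Commute a (orderedMonomial f (Function.update I i 0)) :=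
    Commute.orderedMonomial_right fun j => by
      by_cases hj : j = i
      · simp [hj]
      · simpa [hj] using (ha j hj).pow_right (I j)
  have hI : orderedMonomial f (I - Pi.single i 1) =
      f i ^ (I i - 1) * orderedMonomial f (Function.update I i 0) := by
    rw [orderedMonomial_eq_pow_mul_update hf _ i]
    congr 2
    · simp
    · ext j
      by_cases hj : j = i <;> simp [hj]
  calc a * orderedMonomial f I - orderedMonomial f I * a
      = (a * f i ^ I i - f i ^ I i * a) * orderedMonomial f (Function.update I i 0) := by
        rw [orderedMonomial_eq_pow_mul_update hf I i, mul_assoc, ← hG.eq]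
        noncomm_ring
    _ = I i * orderedMonomial f (I - Pi.single i 1) := by
        rw [mul_pow_sub_pow_mul_of_mul_sub_mul_eq_one hai, hI, mul_assoc]

theorem orderedMonomial_mul_sub_mul_orderedMonomial (hai : f i * a - a * f i = 1)
    (I : Fin d → ℕ) :
    orderedMonomial f I * a - a * orderedMonomial f I =
      I i * orderedMonomial f (I - Pi.single i 1) := by
  have := mul_orderedMonomial_sub_orderedMonomial_mul hf (a := -a)
    (fun j hj => (ha j hj).neg_left) (by rw [neg_mul, mul_neg, sub_neg_eq_add, neg_add_eq_sub, hai])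
    I
  rwa [neg_mul, mul_neg, sub_neg_eq_add, neg_add_eq_sub] at this

end OrderedMonomialCommutator

theorem isUnit_natCast_of_not_dvd {R : Type*} [CommRing R] {p n : ℕ} (hp : p.Prime)
    (hchar : (p : R) = 0) (hn : ¬p ∣ n) : IsUnit (n : R) :=
  isCoprime_zero_left.mp <| by
    simpa [hchar] using (Nat.isCoprime_iff_coprime.mpr
      ((Nat.Prime.coprime_iff_not_dvd hp).mpr hn)).map (Int.castRingHom R)

namespace MvPolynomial

theorem pderiv_pderiv_comm {R σ : Type*} [CommRing R] (i j : σ) (f : MvPolynomial σ R) :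
    pderiv i (pderiv j f) = pderiv j (pderiv i f) := by
  classical
  have h : ⁅pderiv i, pderiv j⁆ = (0 : Derivation R (MvPolynomial σ R) (MvPolynomial σ R)) :=
    derivation_ext fun l => by
      rw [Derivation.commutator_apply]; simp [pderiv_X, Pi.single_apply, apply_ite]
  rw [← sub_eq_zero, ← Derivation.commutator_apply, h, Derivation.zero_apply]

theorem dvd_of_mem_support_of_pderiv_eq_zero {R σ : Type*} [CommRing R] {p : ℕ}
    (hp : p.Prime) (hchar : (p : R) = 0) {f : MvPolynomial σ R} {i : σ} (hf : pderiv i f = 0)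
    {m : σ →₀ ℕ} (hm : m ∈ f.support) : p ∣ m i := by
  by_contra hdvd
  have hmi : 1 ≤ m i := Nat.one_le_iff_ne_zero.mpr fun h => hdvd (h ▸ dvd_zero p)
  have hcoeff : coeff m f * (m i : R) = 0 := by
    have := coeff_pderiv (i := i) f (m - Finsupp.single i 1)
    rwa [hf, coeff_zero, tsub_add_cancel_of_le (Finsupp.single_le_iff.mpr hmi),
      Finsupp.tsub_apply, Finsupp.single_eq_same, ← Nat.cast_add_one, Nat.sub_add_cancel hmi,
      eq_comm] at this
  exact mem_support_iff.mp hm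
    ((isUnit_natCast_of_not_dvd hp hchar hdvd).mul_left_eq_zero.mp hcoeff)

end MvPolynomial

namespace WeylAlgebra

variable {k : Type*} [CommRing k] {d : ℕ}

theorem commute_t_t (i j : Fin d) : Commute (t k d i) (t k d j) := by
  simp only [Commute, SemiconjBy, t, ← map_mul]
  exact RingQuot.mkAlgHom_rel k (WeylRel.tt i j)

theorem commute_del_del (i j : Fin d) : Commute (del k d i) (del k d j) := by
  simp only [Commute, SemiconjBy, del, ← map_mul]
  exact RingQuot.mkAlgHom_rel k (WeylRel.dd i j)

theorem del_mul_t (i j : Fin d) :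
    del k d i * t k d j = t k d j * del k d i + if i = j then 1 else 0 := by
  rw [t, del, ← map_mul, ← map_mul, RingQuot.mkAlgHom_rel k (WeylRel.dt i j), map_add]
  split_ifs <;> simp

theorem commute_del_t {i j : Fin d} (h : i ≠ j) : Commute (del k d i) (t k d j) := by
  simp [Commute, SemiconjBy, del_mul_t, h]

theorem del_mul_t_sub_t_mul_del (i : Fin d) : del k d i * t k d i - t k d i * del k d i = 1 := by
  simp [del_mul_t]

theorem monomialT_eq_orderedMonomial (I : Fin d → ℕ) :
    monomialT k d I = orderedMonomial (t k d) I := rfl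

theorem monomialD_eq_orderedMonomial (J : Fin d → ℕ) :
    monomialD k d J = orderedMonomial (del k d) J := rfl

variable (k d) in
def monomial (s : (Fin d → ℕ) × (Fin d → ℕ)) : WeylAlgebra k d :=
  monomialT k d s.1 * monomialD k d s.2

theorem monomial_zero : monomial k d 0 = 1 := by
  simp [monomial, monomialT_eq_orderedMonomial, monomialD_eq_orderedMonomial,
    orderedMonomial_zero]

theorem t_mul_monomial (i : Fin d) (s : (Fin d → ℕ) × (Fin d → ℕ)) :
    t k d i * monomial k d s = monomial k d (s.1 + Pi.single i 1, s.2) := by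
  have hT : Commute (t k d i) (monomialT k d s.1) :=
    Commute.orderedMonomial_right fun j => (commute_t_t i j).pow_right _
  rw [monomial, monomial, ← mul_assoc, hT.eq, monomialT_eq_orderedMonomial,
    monomialT_eq_orderedMonomial, orderedMonomial_add_single commute_t_t]

theorem monomial_mul_del (i : Fin d) (s : (Fin d → ℕ) × (Fin d → ℕ)) :
    monomial k d s * del k d i = monomial k d (s.1, s.2 + Pi.single i 1) := by
  rw [monomial, monomial, mul_assoc, monomialD_eq_orderedMonomial,
    monomialD_eq_orderedMonomial, orderedMonomial_add_single commute_del_del]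

theorem del_mul_monomial_sub_monomial_mul_del (i : Fin d) (s : (Fin d → ℕ) × (Fin d → ℕ)) :
    del k d i * monomial k d s - monomial k d s * del k d i =
      s.1 i * monomial k d (s.1 - Pi.single i 1, s.2) := by
  have hD : Commute (del k d i) (monomialD k d s.2) :=
    Commute.orderedMonomial_right fun j => (commute_del_del i j).pow_right _
  calc del k d i * monomial k d s - monomial k d s * del k d i
      = (del k d i * monomialT k d s.1 - monomialT k d s.1 * del k d i) * monomialD k d s.2 := by
        rw [monomial, mul_assoc _ _ (del k d i), ← hD.eq, sub_mul, mul_assoc, mul_assoc]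
    _ = s.1 i * monomial k d (s.1 - Pi.single i 1, s.2) := by
        rw [monomialT_eq_orderedMonomial, mul_orderedMonomial_sub_orderedMonomial_mul
          commute_t_t (fun j hj => commute_del_t hj.symm) (del_mul_t_sub_t_mul_del i),
          mul_assoc]
        rfl

theorem monomial_mul_t_sub_t_mul_monomial (i : Fin d) (s : (Fin d → ℕ) × (Fin d → ℕ)) :
    monomial k d s * t k d i - t k d i * monomial k d s =
      s.2 i * monomial k d (s.1, s.2 - Pi.single i 1) := by
  have hT : Commute (t k d i) (monomialT k d s.1) :=
    Commute.orderedMonomial_right fun j => (commute_t_t i j).pow_right _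
  calc monomial k d s * t k d i - t k d i * monomial k d s
      = monomialT k d s.1 * (monomialD k d s.2 * t k d i - t k d i * monomialD k d s.2) := by
        rw [monomial, ← mul_assoc (t k d i), hT.eq, mul_sub, mul_assoc, mul_assoc]
    _ = s.2 i * monomial k d (s.1, s.2 - Pi.single i 1) := by
        rw [monomialD_eq_orderedMonomial, orderedMonomial_mul_sub_mul_orderedMonomial
          commute_del_del (fun j hj => (commute_del_t hj).symm) (del_mul_t_sub_t_mul_del i),
          ← mul_assoc, ← (Nat.cast_commute _ _).eq, mul_assoc]
        rfl

theorem adjoin_range_t_union_range_del :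
    Algebra.adjoin k (Set.range (t k d) ∪ Set.range (del k d)) = ⊤ := by
  have hgen : Set.range (t k d) ∪ Set.range (del k d) =
      RingQuot.mkAlgHom k (WeylRel k d) '' Set.range (FreeAlgebra.ι k) := by
    rw [← Set.range_comp, Sum.range_eq]
    rfl
  rw [hgen, ← AlgHom.map_adjoin, FreeAlgebra.adjoin_range_ι, Algebra.map_top,
    AlgHom.range_eq_top]
  exact RingQuot.mkAlgHom_surjective k (WeylRel k d)

theorem span_range_monomial : Submodule.span k (Set.range (monomial k d)) = ⊤ := by
  set S := Submodule.span k (Set.range (monomial k d))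
  have hgen : ∀ g ∈ Set.range (t k d) ∪ Set.range (del k d), ∀ m ∈ S, g * m ∈ S := by
    intro g hg m hm
    induction hm using Submodule.span_induction with
    | mem m hm =>
      obtain ⟨s, rfl⟩ := hm
      rcases hg with ⟨i, rfl⟩ | ⟨i, rfl⟩
      · rw [t_mul_monomial]
        exact Submodule.subset_span ⟨_, rfl⟩
      · rw [← sub_add_cancel (del k d i * monomial k d s) (monomial k d s * del k d i),
          del_mul_monomial_sub_monomial_mul_del, monomial_mul_del, ← nsmul_eq_mul]
        exact add_mem (S.nsmul_mem (Submodule.subset_span ⟨_, rfl⟩) _)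
          (Submodule.subset_span ⟨_, rfl⟩)
    | zero => simp
    | add x y _ _ hx hy => rw [mul_add]; exact add_mem hx hy
    | smul c x _ hx => rw [mul_smul_comm]; exact S.smul_mem c hx
  have hmul : ∀ w m, m ∈ S → w * m ∈ S := by
    intro w
    have hw : w ∈ Algebra.adjoin k (Set.range (t k d) ∪ Set.range (del k d)) := by
      rw [adjoin_range_t_union_range_del]; trivial
    induction hw using Algebra.adjoin_induction with
    | mem g hg => exact hgen g hg
    | algebraMap r => intro m hm; rw [← Algebra.smul_def]; exact S.smul_mem r hm
    | add x y _ _ hx hy => intro m hm; rw [add_mul]; exact add_mem (hx m hm) (hy m hm)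
    | mul x y _ _ hx hy => intro m hm; rw [mul_assoc]; exact hx _ (hy m hm)
  refine eq_top_iff.mpr fun w _ => ?_
  simpa using hmul w 1 (monomial_zero (k := k) (d := d) ▸ Submodule.subset_span ⟨0, rfl⟩)

open MvPolynomial

-- Unlike the action on `k[x]` alone, which kills `∂_i^p`, this one is faithful: the `y_i`
-- record the `∂_i`.
variable (k d) in
def polyRep : WeylAlgebra k d →ₐ[k] Module.End k (MvPolynomial (Fin d ⊕ Fin d) k) :=
  RingQuot.liftAlgHom k ⟨FreeAlgebra.lift k (Sum.elim
    (fun i => LinearMap.mulLeft k (X (.inl i)))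
    (fun i => (pderiv (.inl i)).toLinearMap + LinearMap.mulLeft k (X (.inr i)))), by
    rintro _ _ (⟨i, j⟩ | ⟨i, j⟩ | ⟨i, j⟩) <;> refine LinearMap.ext fun f => ?_
    · simp only [map_mul, FreeAlgebra.lift_ι_apply, Sum.elim_inl, Module.End.mul_apply,
        LinearMap.mulLeft_apply]
      ring
    · simp only [map_mul, FreeAlgebra.lift_ι_apply, Sum.elim_inr, Module.End.mul_apply,
        LinearMap.add_apply, LinearMap.mulLeft_apply, Derivation.coeFn_coe, map_add, pderiv_mul,
        pderiv_X_of_ne Sum.inr_ne_inl, pderiv_pderiv_comm (.inl i) (.inl j) f]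
      ring
    · have hX : pderiv (.inl i) (X (.inl j) : MvPolynomial (Fin d ⊕ Fin d) k) =
          if i = j then 1 else 0 := by
        simp [pderiv_X, Pi.single_apply, eq_comm]
      split_ifs at hX ⊢ <;>
        simp only [map_mul, map_add, map_one, map_zero, FreeAlgebra.lift_ι_apply, Sum.elim_inl,
          Sum.elim_inr, Module.End.mul_apply, Module.End.one_apply, LinearMap.add_apply,
          LinearMap.zero_apply, LinearMap.mulLeft_apply, Derivation.coeFn_coe, pderiv_mul, hX] <;>
        ring⟩

theorem polyRep_t (i : Fin d) : polyRep k d (t k d i) = LinearMap.mulLeft k (X (.inl i)) := by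
  rw [polyRep, t, RingQuot.liftAlgHom_mkAlgHom_apply, FreeAlgebra.lift_ι_apply, Sum.elim_inl]

theorem polyRep_del (i : Fin d) : polyRep k d (del k d i) =
    (pderiv (.inl i)).toLinearMap + LinearMap.mulLeft k (X (.inr i)) := by
  rw [polyRep, del, RingQuot.liftAlgHom_mkAlgHom_apply, FreeAlgebra.lift_ι_apply, Sum.elim_inr]

theorem pderiv_inl_rename_inr (i : Fin d) (q : MvPolynomial (Fin d) k) :
    pderiv (.inl i) (rename Sum.inr q) = 0 := by
  classical
  exact pderiv_eq_zero_of_notMem_vars fun h => by simpa using vars_rename _ _ h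

theorem polyRep_monomialD_rename (J : Fin d → ℕ) (q : MvPolynomial (Fin d) k) :
    polyRep k d (monomialD k d J) (rename Sum.inr q) =
      rename Sum.inr (orderedMonomial X J * q) := by
  have hpow : ∀ i n q, polyRep k d (del k d i ^ n) (rename Sum.inr q) =
      rename Sum.inr (X i ^ n * q) := by
    intro i n
    induction n with
    | zero => simp
    | succ n ih =>
      intro q
      rw [pow_succ', map_mul, Module.End.mul_apply, ih, polyRep_del, LinearMap.add_apply,
        Derivation.coeFn_coe, pderiv_inl_rename_inr, zero_add, LinearMap.mulLeft_apply,
        ← rename_X, ← map_mul, ← mul_assoc, ← pow_succ']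
  unfold orderedMonomial monomialD
  induction List.finRange d generalizing q with
  | nil => simp
  | cons a l ih =>
    rw [List.map_cons, List.prod_cons, map_mul, Module.End.mul_apply, ih, hpow,
      List.map_cons, List.prod_cons, mul_assoc]

variable (k d) in
def symbol : WeylAlgebra k d →ₗ[k] MvPolynomial (Fin d ⊕ Fin d) k :=
  LinearMap.applyₗ 1 ∘ₗ (polyRep k d).toLinearMap

theorem symbol_apply (w : WeylAlgebra k d) : symbol k d w = polyRep k d w 1 := rfl

def exponent (s : (Fin d → ℕ) × (Fin d → ℕ)) : (Fin d ⊕ Fin d) →₀ ℕ :=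
  Finsupp.equivFunOnFinite.symm (Sum.elim s.1 s.2)

theorem exponent_apply_inl (s : (Fin d → ℕ) × (Fin d → ℕ)) (i : Fin d) :
    exponent s (.inl i) = s.1 i := rfl

theorem exponent_apply_inr (s : (Fin d → ℕ) × (Fin d → ℕ)) (i : Fin d) :
    exponent s (.inr i) = s.2 i := rfl

theorem exponent_injective : Function.Injective (exponent (d := d)) := by
  intro s s' h
  have h' := congrArg (⇑) h
  simp only [exponent, Finsupp.coe_equivFunOnFinite_symm] at h'
  exact Prod.ext (funext fun i => congrFun h' (.inl i)) (funext fun i => congrFun h' (.inr i))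

theorem symbol_monomial (s : (Fin d → ℕ) × (Fin d → ℕ)) :
    symbol k d (monomial k d s) = MvPolynomial.monomial (exponent s) 1 := by
  have hT : polyRep k d (monomialT k d s.1) =
      Algebra.lmul k _ (orderedMonomial (fun i => X (.inl i)) s.1) := by
    rw [monomialT_eq_orderedMonomial, map_orderedMonomial, map_orderedMonomial]
    congr 1
    funext i
    exact polyRep_t i
  rw [symbol_apply, monomial, map_mul, Module.End.mul_apply, ← map_one (rename Sum.inr),
    polyRep_monomialD_rename, hT, Algebra.coe_lmul_eq_mul, mul_one, monomial_eq, C_1, one_mul,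
    Finsupp.prod_fintype _ _ fun _ => pow_zero _, Fintype.prod_sum_type]
  simp [exponent, orderedMonomial_eq_prod, map_prod]

theorem linearIndependent_monomial : LinearIndependent k (monomial k d) := by
  refine LinearIndependent.of_comp (symbol k d) ?_
  have h : symbol k d ∘ monomial k d = basisMonomials (Fin d ⊕ Fin d) k ∘ exponent := by
    funext s
    simp [symbol_monomial, coe_basisMonomials]
  rw [h]
  exact (basisMonomials _ k).linearIndependent.comp _ exponent_injective

variable (k d) in
def monomialBasis : Module.Basis ((Fin d → ℕ) × (Fin d → ℕ)) k (WeylAlgebra k d) :=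
  .mk linearIndependent_monomial span_range_monomial.ge

theorem monomialBasis_apply (s : (Fin d → ℕ) × (Fin d → ℕ)) :
    monomialBasis k d s = monomial k d s :=
  Module.Basis.mk_apply ..

theorem coeff_exponent_symbol (w : WeylAlgebra k d) (s : (Fin d → ℕ) × (Fin d → ℕ)) :
    coeff (exponent s) (symbol k d w) = (monomialBasis k d).repr w s := by
  classical
  have h : lcoeff k (exponent s) ∘ₗ symbol k d =
      Finsupp.lapply s ∘ₗ (monomialBasis k d).repr.toLinearMap :=
    (monomialBasis k d).ext fun s' => by
      rw [LinearMap.comp_apply, LinearMap.comp_apply, LinearEquiv.coe_coe,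
        Module.Basis.repr_self, monomialBasis_apply]
      simp [symbol_monomial, coeff_monomial, Finsupp.single_apply, exponent_injective.eq_iff]
  exact LinearMap.congr_fun h w

theorem symbol_del_mul_sub_mul_del (i : Fin d) (w : WeylAlgebra k d) :
    symbol k d (del k d i * w - w * del k d i) = pderiv (.inl i) (symbol k d w) := by
  have h : symbol k d ∘ₗ (LinearMap.mulLeft k (del k d i) - LinearMap.mulRight k (del k d i)) =
      (pderiv (.inl i)).toLinearMap ∘ₗ symbol k d :=
    (monomialBasis k d).ext fun s => by
      have hexp :
          exponent (s.1 - Pi.single i 1, s.2) = exponent s - Finsupp.single (.inl i) 1 := by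
        ext (v | v) <;> simp [exponent, Pi.single_apply, Finsupp.single_apply, eq_comm]
      simp [monomialBasis_apply, del_mul_monomial_sub_monomial_mul_del, ← nsmul_eq_mul,
        symbol_monomial, pderiv_monomial, hexp, exponent_apply_inl, smul_monomial]
  exact LinearMap.congr_fun h w

theorem symbol_mul_t_sub_t_mul (i : Fin d) (w : WeylAlgebra k d) :
    symbol k d (w * t k d i - t k d i * w) = pderiv (.inr i) (symbol k d w) := by
  have h : symbol k d ∘ₗ (LinearMap.mulRight k (t k d i) - LinearMap.mulLeft k (t k d i)) =
      (pderiv (.inr i)).toLinearMap ∘ₗ symbol k d :=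
    (monomialBasis k d).ext fun s => by
      have hexp :
          exponent (s.1, s.2 - Pi.single i 1) = exponent s - Finsupp.single (.inr i) 1 := by
        ext (v | v) <;> simp [exponent, Pi.single_apply, Finsupp.single_apply, eq_comm]
      simp [monomialBasis_apply, monomial_mul_t_sub_t_mul_monomial, ← nsmul_eq_mul,
        symbol_monomial, pderiv_monomial, hexp, exponent_apply_inr, smul_monomial]
  exact LinearMap.congr_fun h w

theorem mem_center_of_commute_t_of_commute_del {z : WeylAlgebra k d}
    (ht : ∀ i, Commute (t k d i) z) (hdel : ∀ i, Commute (del k d i) z) :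
    z ∈ Subalgebra.center k (WeylAlgebra k d) := by
  have h : Algebra.adjoin k (Set.range (t k d) ∪ Set.range (del k d)) ≤
      Subalgebra.centralizer k {z} :=
    Algebra.adjoin_le <| by
      rintro _ (⟨i, rfl⟩ | ⟨i, rfl⟩) <;>
        simp only [SetLike.mem_coe, Subalgebra.mem_centralizer_iff, Set.mem_singleton_iff,
          forall_eq]
      exacts [(ht i).eq.symm, (hdel i).eq.symm]
  refine Subalgebra.mem_center_iff.mpr fun w => ?_
  have hw : w ∈ Subalgebra.centralizer k {z} :=
    h (by rw [adjoin_range_t_union_range_del]; trivial)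
  exact ((Subalgebra.mem_centralizer_iff k).mp hw z rfl).symm

variable {p : ℕ}

theorem t_pow_mem_center (hchar : (p : k) = 0) (i : Fin d) :
    t k d i ^ p ∈ Subalgebra.center k (WeylAlgebra k d) := by
  refine mem_center_of_commute_t_of_commute_del (fun j => (commute_t_t j i).pow_right p)
    fun j => ?_
  by_cases hji : j = i
  · subst hji
    rw [Commute, SemiconjBy, ← sub_eq_zero, mul_pow_sub_pow_mul_of_mul_sub_mul_eq_one
      (del_mul_t_sub_t_mul_del j), ← map_natCast (algebraMap k _), hchar, map_zero, zero_mul]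
  · exact (commute_del_t hji).pow_right p

theorem del_pow_mem_center (hchar : (p : k) = 0) (i : Fin d) :
    del k d i ^ p ∈ Subalgebra.center k (WeylAlgebra k d) := by
  refine mem_center_of_commute_t_of_commute_del (fun j => Commute.symm ?_)
    fun j => (commute_del_del j i).pow_right p
  by_cases hij : i = j
  · subst hij
    rw [Commute, SemiconjBy, ← sub_eq_zero, pow_mul_sub_mul_pow_of_mul_sub_mul_eq_one
      (del_mul_t_sub_t_mul_del i), ← map_natCast (algebraMap k _), hchar, map_zero, zero_mul]
  · exact (commute_del_t hij).pow_left p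

theorem adjoin_le_center (hchar : (p : k) = 0) :
    Algebra.adjoin k ((Set.range fun i => t k d i ^ p) ∪ Set.range fun i => del k d i ^ p) ≤
      Subalgebra.center k (WeylAlgebra k d) :=
  Algebra.adjoin_le <| by
    rintro _ (⟨i, rfl⟩ | ⟨i, rfl⟩)
    exacts [t_pow_mem_center hchar i, del_pow_mem_center hchar i]

theorem monomial_nsmul_mem_adjoin (s : (Fin d → ℕ) × (Fin d → ℕ)) :
    monomial k d (p • s) ∈
      Algebra.adjoin k ((Set.range fun i => t k d i ^ p) ∪ Set.range fun i => del k d i ^ p) := by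
  rw [monomial, monomialT_eq_orderedMonomial, monomialD_eq_orderedMonomial, Prod.smul_fst,
    Prod.smul_snd, orderedMonomial_nsmul, orderedMonomial_nsmul]
  exact mul_mem (orderedMonomial_mem (fun i => Algebra.subset_adjoin (.inl ⟨i, rfl⟩)) _)
    (orderedMonomial_mem (fun i => Algebra.subset_adjoin (.inr ⟨i, rfl⟩)) _)

theorem pderiv_symbol_eq_zero_of_mem_center {z : WeylAlgebra k d}
    (hz : z ∈ Subalgebra.center k (WeylAlgebra k d)) (v : Fin d ⊕ Fin d) :
    pderiv v (symbol k d z) = 0 := by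
  rcases v with i | i
  · rw [← symbol_del_mul_sub_mul_del, Subalgebra.mem_center_iff.mp hz, sub_self, map_zero]
  · rw [← symbol_mul_t_sub_t_mul, Subalgebra.mem_center_iff.mp hz, sub_self, map_zero]

theorem mem_span_monomial_nsmul_of_mem_center (hp : p.Prime) (hchar : (p : k) = 0)
    {z : WeylAlgebra k d} (hz : z ∈ Subalgebra.center k (WeylAlgebra k d)) :
    z ∈ Submodule.span k (Set.range fun s => monomial k d (p • s)) := by
  have hrange : (Set.range fun s => monomial k d (p • s)) =
      monomialBasis k d '' Set.range (p • ·) := by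
    rw [← Set.range_comp]
    simp [monomialBasis_apply, Function.comp_def]
  rw [hrange, Module.Basis.mem_span_image]
  intro s hs
  have hsupp : exponent s ∈ (symbol k d z).support := by
    rw [mem_support_iff, coeff_exponent_symbol]
    exact Finsupp.mem_support_iff.mp hs
  have hdvd (v) := dvd_of_mem_support_of_pderiv_eq_zero hp hchar
    (pderiv_symbol_eq_zero_of_mem_center hz v) hsupp
  exact ⟨(fun i => s.1 i / p, fun i => s.2 i / p),
    Prod.ext (funext fun i => Nat.mul_div_cancel' (hdvd (.inl i)))
      (funext fun i => Nat.mul_div_cancel' (hdvd (.inr i)))⟩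

theorem center_eq_adjoin (hp : p.Prime) (hchar : (p : k) = 0) :
    Subalgebra.center k (WeylAlgebra k d) =
      Algebra.adjoin k ((Set.range fun i => t k d i ^ p) ∪ Set.range fun i => del k d i ^ p) := by
  refine le_antisymm (fun z hz => ?_) (adjoin_le_center hchar)
  have hspan : Submodule.span k (Set.range fun s => monomial k d (p • s)) ≤
      Subalgebra.toSubmodule (Algebra.adjoin k _) :=
    Submodule.span_le.mpr (Set.range_subset_iff.mpr monomial_nsmul_mem_adjoin)
  exact hspan (mem_span_monomial_nsmul_of_mem_center hp hchar hz)

theorem monomial_nsmul_mul_monomial (hchar : (p : k) = 0)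
    (s s' : (Fin d → ℕ) × (Fin d → ℕ)) :
    monomial k d (p • s) * monomial k d s' = monomial k d (p • s + s') := by
  have hD : monomialD k d (p • s).2 ∈ Subalgebra.center k (WeylAlgebra k d) := by
    rw [Prod.smul_snd, monomialD_eq_orderedMonomial, orderedMonomial_nsmul]
    exact orderedMonomial_mem (del_pow_mem_center hchar) _
  calc monomial k d (p • s) * monomial k d s'
      = monomialT k d (p • s).1 * monomialT k d s'.1 *
          (monomialD k d (p • s).2 * monomialD k d s'.2) := by
        rw [monomial, monomial, mul_assoc, ← mul_assoc (monomialD k d _),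
          ← Subalgebra.mem_center_iff.mp hD, mul_assoc, mul_assoc]
    _ = monomial k d (p • s + s') := by
        rw [monomialT_eq_orderedMonomial, monomialT_eq_orderedMonomial,
          monomialD_eq_orderedMonomial, monomialD_eq_orderedMonomial,
          ← orderedMonomial_add commute_t_t, ← orderedMonomial_add commute_del_del]
        rfl

variable (d p) in
def divModEquiv [NeZero p] :
    (Fin d → ℕ) × (Fin d → ℕ) ≃
      ((Fin d → Fin p) × (Fin d → Fin p)) × ((Fin d → ℕ) × (Fin d → ℕ)) :=
  let e : (Fin d → ℕ) ≃ (Fin d → ℕ) × (Fin d → Fin p) :=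
    (Equiv.piCongrRight fun _ => Nat.divModEquiv p).trans (Equiv.arrowProdEquivProdArrow _ _ _)
  (e.prodCongr e).trans ((Equiv.prodProdProdComm _ _ _ _).trans (Equiv.prodComm _ _))

theorem divModEquiv_symm_apply [NeZero p] (r : (Fin d → Fin p) × (Fin d → Fin p))
    (s : (Fin d → ℕ) × (Fin d → ℕ)) :
    (divModEquiv d p).symm (r, s) = p • s + (fun i => (r.1 i : ℕ), fun i => (r.2 i : ℕ)) := by
  ext i <;> simp [divModEquiv, Nat.divModEquiv, mul_comm]

theorem exists_basis_monomial_over_center (hp : p.Prime) (hchar : (p : k) = 0) :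
    ∃ b : Module.Basis ((Fin d → Fin p) × (Fin d → Fin p)) (Subring.center (WeylAlgebra k d))
        (WeylAlgebra k d),
      ∀ r, b r = monomial k d (fun i => (r.1 i : ℕ), fun i => (r.2 i : ℕ)) := by
  have : NeZero p := ⟨hp.ne_zero⟩
  let Z := Subalgebra.center k (WeylAlgebra k d)
  let w (s : (Fin d → ℕ) × (Fin d → ℕ)) : Z :=
    ⟨monomial k d (p • s), adjoin_le_center hchar (monomial_nsmul_mem_adjoin s)⟩
  let v (r : (Fin d → Fin p) × (Fin d → Fin p)) : WeylAlgebra k d :=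
    monomial k d (fun i => (r.1 i : ℕ), fun i => (r.2 i : ℕ))
  have hw : Submodule.span k (Set.range w) = ⊤ := by
    refine eq_top_iff.mpr fun z _ => ?_
    rw [← Submodule.apply_mem_span_image_iff_mem_span (f := Z.val.toLinearMap)
      Subtype.val_injective, ← Set.range_comp]
    exact mem_span_monomial_nsmul_of_mem_center hp hchar z.2
  have hb : ⇑((monomialBasis k d).reindex (divModEquiv d p)) = fun i => w i.2 • v i.1 := by
    funext ⟨r, s⟩
    rw [Module.Basis.reindex_apply, divModEquiv_symm_apply, monomialBasis_apply,
      ← monomial_nsmul_mul_monomial hchar]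
    rfl
  let b : Module.Basis _ Z (WeylAlgebra k d) :=
    .mk (.of_smul_of_span_eq_top hw (hb ▸ Module.Basis.linearIndependent _))
      (Submodule.span_eq_top_of_span_smul_eq_top (hb ▸ Module.Basis.span_eq _)).ge
  exact ⟨b.mapCoeffs (.subringCongr (Subalgebra.center_toSubring k _)) fun _ _ => rfl,
    fun r => (b.mapCoeffs_apply _ _ r).trans (Module.Basis.mk_apply _ _ r)⟩

end WeylAlgebra

open WeylAlgebra in
theorem weylAlgebra_center_and_free_over_center_general (p : ℕ) (hp : p.Prime)
    (k : Type*) [CommRing k] (hchar : (p : k) = 0) (d : ℕ) :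
    Subalgebra.center k (WeylAlgebra k d) =
      Algebra.adjoin k
        ((Set.range fun i : Fin d => t k d i ^ p) ∪
          (Set.range fun i : Fin d => del k d i ^ p)) ∧
    ∃ b : Module.Basis ((Fin d → Fin p) × (Fin d → Fin p))
        (Subring.center (WeylAlgebra k d)) (WeylAlgebra k d),
      ∀ IJ : (Fin d → Fin p) × (Fin d → Fin p),
        b IJ = monomialT k d (fun i => (IJ.1 i : ℕ)) *
          monomialD k d fun i => (IJ.2 i : ℕ) :=
  ⟨center_eq_adjoin hp hchar, exists_basis_monomial_over_center hp hchar⟩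

open WeylAlgebra in
/-- In characteristic `p`, the center `Z` of the `d`-th Weyl algebra `W` is the
`k`-subalgebra generated by `t_1^p,…,t_d^p,∂_1^p,…,∂_d^p`, and `W` is a free `Z`-module
of rank `p^{2d}` with basis the monomials `t^I ∂^J` with all exponents in `{0,…,p−1}`. -/
theorem weylAlgebra_center_and_free_over_center (p : ℕ) (hp : p.Prime)
    (k : Type*) [CommRing k] (hchar : (p : k) = 0) (d : ℕ) (hd : 1 ≤ d) :
    Subalgebra.center k (WeylAlgebra k d) =
      Algebra.adjoin k
        ((Set.range fun i : Fin d => t k d i ^ p) ∪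
          (Set.range fun i : Fin d => del k d i ^ p)) ∧
    ∃ b : Module.Basis ((Fin d → Fin p) × (Fin d → Fin p))
        (Subring.center (WeylAlgebra k d)) (WeylAlgebra k d),
      ∀ IJ : (Fin d → Fin p) × (Fin d → Fin p),
        b IJ = monomialT k d (fun i => (IJ.1 i : ℕ)) *
          monomialD k d fun i => (IJ.2 i : ℕ) :=
  weylAlgebra_center_and_free_over_center_general p hp k hchar d
end
end

section
/- Let p be a prime, k a commutative ring with p·1 = 0, and R = k[t_1, …, t_d] the polynomial ring in d ≥ 1 variables. Let A ⊆ R be the k-subalgebra generated by t_1^p, …, t_d^p, so that R is a finite free A-module of rank p^d. Then for every g ∈ R, the norm N_{R/A}(g) ∈ A (the determinant of the A-linear endomorphism of R given by multiplication by g), viewed as an element of R via the inclusion A ⊆ R, equals g^{p^d}. -/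
/-!
After base change along `A → R`, the norm of `g` becomes the determinant of multiplication by
`1 ⊗ g` on `R ⊗[A] R`, viewed as an `R`-module through the left factor. There the elements
`εᵢ = 1 ⊗ tᵢ - tᵢ ⊗ 1` satisfy `εᵢ ^ p = 1 ⊗ tᵢ ^ p - tᵢ ^ p ⊗ 1 = 0`, so the monomials `ε ^ e`
with all `eᵢ < p` span `R ⊗[A] R`; there are as many of them as the rank, so they form a basis.
Since `1 ⊗ g - g ⊗ 1` lies in the ideal generated by the `εᵢ`, the matrix of multiplication by
`1 ⊗ g` in this basis is triangular for the total degree of `e`, with `g` on the diagonal, and its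
determinant is `g ^ (p ^ d)`.
-/

open MvPolynomial TensorProduct

theorem Matrix.det_eq_pow_card_of_forall_le {ι R : Type*} [Fintype ι] [DecidableEq ι]
    [CommRing R] (M : Matrix ι ι R) (w : ι → ℕ) (r : R)
    (hM : ∀ i j, w i ≤ w j → M i j = if i = j then r else 0) :
    M.det = r ^ Fintype.card ι := by
  have hbt : M.BlockTriangular (OrderDual.toDual ∘ w) := fun i j (hij : w i < w j) => by
    rw [hM i j hij.le, if_neg (by rintro rfl; exact hij.false)]
  have hblock (a : ℕᵒᵈ) : M.toSquareBlock (OrderDual.toDual ∘ w) a = diagonal fun _ => r := by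
    ext i j
    rw [toSquareBlock_def, of_apply, hM i j (show w i = w j from i.2.trans j.2.symm).le,
      diagonal_apply]
    simp only [Subtype.ext_iff]
  simp_rw [hbt.det, hblock, det_diagonal, Finset.prod_const, Finset.card_univ,
    Fintype.card_subtype, Finset.prod_pow_eq_pow_sum, ← Finset.card_eq_sum_card_image,
    Finset.card_univ]

section TensorSquare

variable (A : Type*) {R σ : Type*} [CommRing A] [CommRing R] [Algebra A R] (t : σ → R) {p : ℕ}

def tensorDiff (i : σ) : R ⊗[A] R := 1 ⊗ₜ t i - t i ⊗ₜ 1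

variable {A t} in
lemma tensorDiff_pow_eq_zero (hp : p.Prime) (hchar : (p : R) = 0)
    (ht : ∀ i, t i ^ p ∈ (algebraMap A R).range) (i : σ) : tensorDiff A t i ^ p = 0 := by
  nontriviality R ⊗[A] R
  have : Fact p.Prime := ⟨hp⟩
  have : CharP (R ⊗[A] R) p := (CharP.charP_iff_prime_eq_zero hp).2 <| by
    rw [← map_natCast (algebraMap R (R ⊗[A] R)), hchar, map_zero]
  obtain ⟨a, ha⟩ := ht i
  rw [tensorDiff, sub_pow_char, Algebra.TensorProduct.tmul_pow, Algebra.TensorProduct.tmul_pow,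
    one_pow, ← ha, Algebra.TensorProduct.tmul_one_eq_one_tmul, sub_self]

variable [Fintype σ]

def tensorDiffPow (m : σ → ℕ) : R ⊗[A] R := ∏ i, tensorDiff A t i ^ m i

def tensorDiffFiltration (w : ℕ) : Submodule R (R ⊗[A] R) :=
  Submodule.span R (tensorDiffPow A t '' {m | w ≤ ∑ i, m i})

variable {A t}

lemma tensorDiffPow_add (m m' : σ → ℕ) :
    tensorDiffPow A t (m + m') = tensorDiffPow A t m * tensorDiffPow A t m' := by
  simp only [tensorDiffPow, Pi.add_apply, pow_add, Finset.prod_mul_distrib]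

lemma tensorDiffPow_single [DecidableEq σ] (i : σ) :
    tensorDiffPow A t (Pi.single i 1) = tensorDiff A t i := by
  rw [tensorDiffPow, Finset.prod_eq_single i
    (fun j _ hj => by rw [Pi.single_eq_of_ne hj, pow_zero])
    (fun h => absurd (Finset.mem_univ i) h), Pi.single_eq_same, pow_one]

lemma tensorDiffPow_mem_filtration {m : σ → ℕ} {w : ℕ} (hw : w ≤ ∑ i, m i) :
    tensorDiffPow A t m ∈ tensorDiffFiltration A t w :=
  Submodule.subset_span ⟨m, hw, rfl⟩

lemma tensorDiffFiltration_antitone : Antitone (tensorDiffFiltration A t) :=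
  fun _ _ h => Submodule.span_mono (Set.image_mono fun _ hm => le_trans h hm)

lemma mul_mem_tensorDiffFiltration {x y : R ⊗[A] R} {w w' : ℕ}
    (hx : x ∈ tensorDiffFiltration A t w) (hy : y ∈ tensorDiffFiltration A t w') :
    x * y ∈ tensorDiffFiltration A t (w + w') := by
  induction hx using Submodule.span_induction with
  | mem x hx =>
    induction hy using Submodule.span_induction with
    | mem y hy =>
      obtain ⟨m, hm, rfl⟩ := hx
      obtain ⟨m', hm', rfl⟩ := hy
      rw [← tensorDiffPow_add]
      apply tensorDiffPow_mem_filtration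
      simp only [Pi.add_apply, Finset.sum_add_distrib]
      exact add_le_add hm hm'
    | zero => rw [mul_zero]; exact Submodule.zero_mem _
    | add y y' _ _ hy hy' => rw [mul_add]; exact add_mem hy hy'
    | smul r y _ hy => rw [mul_smul_comm]; exact Submodule.smul_mem _ _ hy
  | zero => rw [zero_mul]; exact Submodule.zero_mem _
  | add x x' _ _ hx hx' => rw [add_mul]; exact add_mem hx hx'
  | smul r x _ hx => rw [smul_mul_assoc]; exact Submodule.smul_mem _ _ hx

lemma tensorDiff_mem_filtration_one [DecidableEq σ] (i : σ) :
    tensorDiff A t i ∈ tensorDiffFiltration A t 1 := by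
  rw [← tensorDiffPow_single]
  exact tensorDiffPow_mem_filtration (by simp)

lemma one_tmul_sub_tmul_one_mem_filtration_one (hgen : Algebra.adjoin A (Set.range t) = ⊤)
    (r : R) : 1 ⊗ₜ r - r ⊗ₜ 1 ∈ tensorDiffFiltration A t 1 := by
  classical
  have hr : r ∈ Algebra.adjoin A (Set.range t) := hgen ▸ Algebra.mem_top
  induction hr using Algebra.adjoin_induction with
  | mem r hr =>
    obtain ⟨i, rfl⟩ := hr
    exact tensorDiff_mem_filtration_one i
  | algebraMap a =>
    rw [← Algebra.TensorProduct.tmul_one_eq_one_tmul, sub_self]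
    exact Submodule.zero_mem _
  | add r s _ _ hr hs =>
    rw [tmul_add, add_tmul, add_sub_add_comm]
    exact add_mem hr hs
  | mul r s _ _ hr hs =>
    have h : (1 : R) ⊗ₜ[A] (r * s) - (r * s) ⊗ₜ 1 =
        (1 ⊗ₜ r - r ⊗ₜ 1) * (1 ⊗ₜ s - s ⊗ₜ 1) + s • (1 ⊗ₜ r - r ⊗ₜ 1) +
          r • (1 ⊗ₜ s - s ⊗ₜ 1) := by
      simp only [smul_sub, smul_tmul', smul_eq_mul, mul_one, sub_mul, mul_sub,
        Algebra.TensorProduct.tmul_mul_tmul, one_mul, mul_comm s r]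
      abel
    rw [h]
    exact add_mem (add_mem (tensorDiffFiltration_antitone (by norm_num)
      (mul_mem_tensorDiffFiltration hr hs)) (Submodule.smul_mem _ _ hr))
      (Submodule.smul_mem _ _ hs)

lemma tensorDiffFiltration_zero (hgen : Algebra.adjoin A (Set.range t) = ⊤) :
    tensorDiffFiltration A t 0 = ⊤ := by
  have hone : (1 : R ⊗[A] R) ∈ tensorDiffFiltration A t 0 := by
    simpa [tensorDiffPow] using tensorDiffPow_mem_filtration (A := A) (t := t) (m := 0) le_rfl
  refine eq_top_iff.2 fun x _ => ?_
  induction x using TensorProduct.induction_on with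
  | zero => exact Submodule.zero_mem _
  | tmul r s =>
    have h : r ⊗ₜ[A] s = r • (s • (1 : R ⊗[A] R) + (1 ⊗ₜ s - s ⊗ₜ 1)) := by
      simp [smul_tmul', Algebra.TensorProduct.one_def]
    rw [h]
    exact Submodule.smul_mem _ _ (add_mem (Submodule.smul_mem _ _ hone)
      (tensorDiffFiltration_antitone zero_le_one
        (one_tmul_sub_tmul_one_mem_filtration_one hgen s)))
  | add x y hx hy => exact add_mem (hx trivial) (hy trivial)

lemma tensorDiffPow_eq_zero (hnil : ∀ i, tensorDiff A t i ^ p = 0) {m : σ → ℕ} {i : σ}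
    (hi : p ≤ m i) : tensorDiffPow A t m = 0 :=
  Finset.prod_eq_zero (Finset.mem_univ i) (pow_eq_zero_of_le hi (hnil i))

lemma top_le_span_tensorDiffPow (hnil : ∀ i, tensorDiff A t i ^ p = 0)
    (hgen : Algebra.adjoin A (Set.range t) = ⊤) :
    ⊤ ≤ Submodule.span R (Set.range fun e : σ → Fin p => tensorDiffPow A t fun i => e i) := by
  rw [← tensorDiffFiltration_zero hgen]
  refine Submodule.span_le.2 ?_
  rintro _ ⟨m, -, rfl⟩
  by_cases hm : ∀ i, m i < p
  · exact Submodule.subset_span ⟨fun i => ⟨m i, hm i⟩, rfl⟩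
  · push Not at hm
    obtain ⟨i, hi⟩ := hm
    rw [tensorDiffPow_eq_zero hnil hi]
    exact Submodule.zero_mem _

variable (A t) in
noncomputable def tensorDiffBasis [DecidableEq σ] [Nontrivial R]
    (hnil : ∀ i, tensorDiff A t i ^ p = 0) (hgen : Algebra.adjoin A (Set.range t) = ⊤)
    (b : Module.Basis (σ → Fin p) A R) :
    Module.Basis (σ → Fin p) R (R ⊗[A] R) :=
  basisOfTopLeSpanOfCardEqFinrank _ (top_le_span_tensorDiffPow hnil hgen)
    (Module.finrank_eq_card_basis (b.baseChange R)).symm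

section Basis

variable [DecidableEq σ] [Nontrivial R] (hnil : ∀ i, tensorDiff A t i ^ p = 0)
  (hgen : Algebra.adjoin A (Set.range t) = ⊤) (b : Module.Basis (σ → Fin p) A R)

lemma tensorDiffBasis_apply (e : σ → Fin p) :
    tensorDiffBasis A t hnil hgen b e = tensorDiffPow A t fun i => e i :=
  congr_fun (coe_basisOfTopLeSpanOfCardEqFinrank _ _ _) e

lemma tensorDiffBasis_repr_eq_zero {v : R ⊗[A] R} {w : ℕ}
    (hv : v ∈ tensorDiffFiltration A t w) {e : σ → Fin p} (he : ∑ i, (e i : ℕ) < w) :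
    (tensorDiffBasis A t hnil hgen b).repr v e = 0 := by
  induction hv using Submodule.span_induction with
  | mem x hx =>
    obtain ⟨m, hm, rfl⟩ := hx
    by_cases hlt : ∀ i, m i < p
    · have hne : (fun i => (⟨m i, hlt i⟩ : Fin p)) ≠ e := by
        rintro rfl
        exact (hm.trans_lt he).false
      rw [show m = fun i => ((⟨m i, hlt i⟩ : Fin p) : ℕ) from rfl,
        ← tensorDiffBasis_apply hnil hgen b, Module.Basis.repr_self, Finsupp.single_apply,
        if_neg hne]
    · push Not at hlt
      obtain ⟨i, hi⟩ := hlt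
      rw [tensorDiffPow_eq_zero hnil hi, map_zero, Finsupp.zero_apply]
  | zero => rw [map_zero, Finsupp.zero_apply]
  | add x y _ _ hx hy => rw [map_add, Finsupp.add_apply, hx, hy, add_zero]
  | smul r x _ hx => rw [map_smul, Finsupp.smul_apply, hx, smul_zero]

lemma tensorDiffBasis_repr_one_tmul_mul (g : R) {e f : σ → Fin p}
    (hef : ∑ i, (e i : ℕ) ≤ ∑ i, (f i : ℕ)) :
    (tensorDiffBasis A t hnil hgen b).repr ((1 ⊗ₜ g) * tensorDiffBasis A t hnil hgen b f) e =
      if e = f then g else 0 := by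
  have hsplit : (1 ⊗ₜ g) * tensorDiffBasis A t hnil hgen b f =
      g • tensorDiffBasis A t hnil hgen b f +
        (1 ⊗ₜ g - g ⊗ₜ 1) * tensorDiffBasis A t hnil hgen b f := by
    rw [Algebra.smul_def, Algebra.TensorProduct.algebraMap_apply, Algebra.algebraMap_self,
      RingHom.id_apply, ← add_mul, add_sub_cancel]
  have hmem : (1 ⊗ₜ g - g ⊗ₜ 1) * tensorDiffBasis A t hnil hgen b f ∈
      tensorDiffFiltration A t (1 + ∑ i, (f i : ℕ)) := by
    rw [tensorDiffBasis_apply]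
    exact mul_mem_tensorDiffFiltration (one_tmul_sub_tmul_one_mem_filtration_one hgen g)
      (tensorDiffPow_mem_filtration le_rfl)
  rw [hsplit, map_add, map_smul, Module.Basis.repr_self, Finsupp.add_apply, Finsupp.smul_apply,
    tensorDiffBasis_repr_eq_zero hnil hgen b hmem (by omega), add_zero, Finsupp.single_apply]
  simp [eq_comm]

end Basis

theorem Algebra.algebraMap_norm_eq_pow_of_pow_mem [DecidableEq σ] (hp : p.Prime)
    (hchar : (p : R) = 0) (ht : ∀ i, t i ^ p ∈ (algebraMap A R).range)
    (hgen : Algebra.adjoin A (Set.range t) = ⊤) (b : Module.Basis (σ → Fin p) A R) (g : R) :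
    algebraMap A R (Algebra.norm A g) = g ^ p ^ Fintype.card σ := by
  nontriviality R
  have := Module.Free.of_basis b
  have := Module.Finite.of_basis b
  let c := tensorDiffBasis A t (tensorDiff_pow_eq_zero hp hchar ht) hgen b
  have hcard : p ^ Fintype.card σ = Fintype.card (σ → Fin p) := by simp
  rw [Algebra.norm_apply, ← LinearMap.det_baseChange, Algebra.baseChange_lmul,
    ← LinearMap.det_toMatrix c, hcard]
  refine Matrix.det_eq_pow_card_of_forall_le _ (fun e => ∑ i, (e i : ℕ)) g fun e f hef => ?_
  rw [LinearMap.toMatrix_apply, Algebra.coe_lmul_eq_mul, LinearMap.mul_apply']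
  exact tensorDiffBasis_repr_one_tmul_mul _ hgen b g hef

end TensorSquare

namespace MvPolynomial

variable {σ k : Type*} [CommRing k] (p : ℕ)

theorem adjoin_range_X_pow_eq_range_expand :
    Algebra.adjoin k (Set.range fun i : σ => (X i : MvPolynomial σ k) ^ p) = (expand p).range :=
  Algebra.adjoin_range_eq_range_aeval k _

theorem mem_adjoin_range_X_pow_iff {x : MvPolynomial σ k} :
    x ∈ Algebra.adjoin k (Set.range fun i : σ => (X i : MvPolynomial σ k) ^ p) ↔
      ∃ φ, expand p φ = x := by
  rw [adjoin_range_X_pow_eq_range_expand, AlgHom.mem_range]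

variable {p} [Fintype σ]

noncomputable def finsuppOfFinFun (e : σ → Fin p) : σ →₀ ℕ :=
  Finsupp.equivFunOnFinite.symm fun i => e i

@[simp] lemma finsuppOfFinFun_apply (e : σ → Fin p) (i : σ) : finsuppOfFinFun e i = e i := rfl

lemma coeff_expand_mul_monomial [NeZero p] (φ : MvPolynomial σ k) (m : σ →₀ ℕ)
    (e e' : σ → Fin p) :
    coeff (p • m + finsuppOfFinFun e) (expand p φ * monomial (finsuppOfFinFun e') 1) =
      if e' = e then coeff m φ else 0 := by
  rw [coeff_mul_monomial', mul_one]
  split_ifs with hle he he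
  · rw [he, add_tsub_cancel_right, coeff_expand_smul p (NeZero.ne p)]
  · obtain ⟨i, hi⟩ := Function.ne_iff.1 he
    refine coeff_expand_of_not_dvd φ (i := i) fun hdvd => hi (Fin.ext ?_)
    have hle_i : (e' i : ℕ) ≤ p * m i + e i := by simpa using hle i
    have hmod : (e' i : ℕ) ≡ e i [MOD p] := by
      refine ((Nat.modEq_iff_dvd' hle_i).2 (by simpa using hdvd)).trans ?_
      simp [Nat.ModEq]
    exact hmod.eq_of_lt_of_lt (e' i).isLt (e i).isLt
  · exact absurd (he ▸ le_add_self) hle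
  · rfl

variable (k p)

lemma linearIndependent_monomial_adjoin_X_pow [DecidableEq σ] [NeZero p] :
    LinearIndependent (Algebra.adjoin k (Set.range fun i : σ => (X i : MvPolynomial σ k) ^ p))
      fun e : σ → Fin p => monomial (finsuppOfFinFun e) (1 : k) := by
  rw [Fintype.linearIndependent_iff]
  intro c hc e
  choose φ hφ using fun e => (mem_adjoin_range_X_pow_iff p).1 (c e).2
  suffices φ e = 0 by rw [← Subtype.coe_inj, ← hφ, this, map_zero]; rfl
  ext m
  have := congr_arg (coeff (p • m + finsuppOfFinFun e)) hc
  simpa only [coeff_sum, Subalgebra.smul_def, smul_eq_mul, ← hφ, coeff_expand_mul_monomial,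
    Finset.sum_ite_eq', Finset.mem_univ, if_true, coeff_zero] using this

lemma top_le_span_monomial_adjoin_X_pow [NeZero p] :
    ⊤ ≤ Submodule.span (Algebra.adjoin k (Set.range fun i : σ => (X i : MvPolynomial σ k) ^ p))
      (Set.range fun e : σ → Fin p => monomial (finsuppOfFinFun e) (1 : k)) := by
  intro r _
  rw [← support_sum_monomial_coeff r]
  refine Submodule.sum_mem _ fun m _ => ?_
  let e : σ → Fin p := fun i => ⟨m i % p, Nat.mod_lt _ (NeZero.pos p)⟩
  let q : σ →₀ ℕ := Finsupp.equivFunOnFinite.symm fun i => m i / p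
  have hq : monomial (p • q) (coeff m r) ∈
      Algebra.adjoin k (Set.range fun i : σ => (X i : MvPolynomial σ k) ^ p) :=
    (mem_adjoin_range_X_pow_iff p).2 ⟨monomial q (coeff m r), expand_monomial p q _⟩
  have hm : monomial m (coeff m r) = (⟨_, hq⟩ : Algebra.adjoin k _) •
      monomial (finsuppOfFinFun e) (1 : k) := by
    simp only [Subalgebra.smul_def, smul_eq_mul, monomial_mul, mul_one]
    congr
    ext i
    simp [q, e, Nat.div_add_mod]
  rw [hm]
  exact Submodule.smul_mem _ _ (Submodule.subset_span ⟨e, rfl⟩)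

noncomputable def basisAdjoinXPow [DecidableEq σ] [NeZero p] :
    Module.Basis (σ → Fin p)
      (Algebra.adjoin k (Set.range fun i : σ => (X i : MvPolynomial σ k) ^ p))
      (MvPolynomial σ k) :=
  .mk (linearIndependent_monomial_adjoin_X_pow k p) (top_le_span_monomial_adjoin_X_pow k p)

end MvPolynomial

theorem norm_eq_pow_p_pow_d_general (p : ℕ) (hp : p.Prime)
    (k : Type*) [CommRing k] (hchar : (p : k) = 0) (d : ℕ)
    (g : MvPolynomial (Fin d) k) :
    ((Algebra.norm
        (Algebra.adjoin k (Set.range fun i : Fin d => (X i : MvPolynomial (Fin d) k) ^ p))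
        g : _) : MvPolynomial (Fin d) k) = g ^ (p ^ d) := by
  set A := Algebra.adjoin k (Set.range fun i : Fin d => (X i : MvPolynomial (Fin d) k) ^ p)
  have : NeZero p := ⟨hp.ne_zero⟩
  have hchar' : (p : MvPolynomial (Fin d) k) = 0 := by rw [← map_natCast C, hchar, map_zero]
  have hpow (i : Fin d) : (X i : MvPolynomial (Fin d) k) ^ p ∈ (algebraMap A _).range :=
    ⟨⟨_, Algebra.subset_adjoin ⟨i, rfl⟩⟩, rfl⟩
  have hgen : Algebra.adjoin A (Set.range (X : Fin d → MvPolynomial (Fin d) k)) = ⊤ := by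
    refine Subalgebra.restrictScalars_injective k ?_
    rw [Algebra.restrictScalars_adjoin, Subalgebra.restrictScalars_top, eq_top_iff,
      ← adjoin_range_X]
    exact Algebra.adjoin_mono Set.subset_union_right
  simpa using Algebra.algebraMap_norm_eq_pow_of_pow_mem hp hchar' hpow hgen
    (basisAdjoinXPow k p) g

/-- In characteristic `p`, for `R = k[t_1,…,t_d]` and `A = k[t_1^p,…,t_d^p] ⊆ R` (so that
`R` is finite free of rank `p^d` over `A`), the norm of any `g ∈ R` over `A` — the
determinant of multiplication by `g` on `R` as an `A`-module — equals `g^{p^d}` in `R`. -/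
theorem norm_eq_pow_p_pow_d (p : ℕ) (hp : p.Prime)
    (k : Type*) [CommRing k] (hchar : (p : k) = 0) (d : ℕ) (hd : 1 ≤ d)
    (g : MvPolynomial (Fin d) k) :
    ((Algebra.norm
        (Algebra.adjoin k (Set.range fun i : Fin d => (X i : MvPolynomial (Fin d) k) ^ p))
        g : _) : MvPolynomial (Fin d) k) = g ^ (p ^ d) :=
  norm_eq_pow_p_pow_d_general p hp k hchar d g
end

section
/- Let p be a prime, k an algebraically closed field of characteristic p, and V a finite-dimensional k-vector space. Let f : V → V be an additive map that is p^{-1}-linear, i.e. f(c^p · v) = c · f(v) for all c ∈ k and v ∈ V. Then the map v ↦ v − f(v) is surjective: for every w ∈ V there exists v ∈ V with v − f(v) = w. -/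
open Finset Polynomial

lemma AS_exists_root (p : ℕ) (hp : p.Prime) (k : Type*) [Field k] [IsAlgClosed k]
    (n : ℕ) (a : ℕ → k) :
    ∃ t : k, t ^ p ^ n = (∑ i ∈ range n, (a i * t) ^ p ^ i) + 1 := by
  set r : k[X] := (∑ i ∈ range n, C (a i ^ p ^ i) * X ^ p ^ i) + 1 with hr
  have hrd : r.degree < ((p ^ n : ℕ) : WithBot ℕ) := by
    have hpn : 0 < p ^ n := pow_pos hp.pos n
    apply lt_of_le_of_lt (degree_add_le _ _)
    apply max_lt
    · apply lt_of_le_of_lt (degree_sum_le _ _)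
      rw [Finset.sup_lt_iff (by exact_mod_cast WithBot.bot_lt_coe _)]
      intro i hi
      apply lt_of_le_of_lt (degree_C_mul_X_pow_le _ _)
      exact_mod_cast pow_lt_pow_right₀ hp.one_lt (mem_range.mp hi)
    · exact lt_of_le_of_lt degree_one_le (by exact_mod_cast hpn)
  have hq : (X ^ p ^ n - r).degree = ((p ^ n : ℕ) : WithBot ℕ) := by
    rw [degree_sub_eq_left_of_degree_lt (by rwa [degree_X_pow]), degree_X_pow]
  have hne : (X ^ p ^ n - r).degree ≠ 0 := by
    rw [hq]
    exact_mod_cast (pow_pos hp.pos n).ne'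
  obtain ⟨t, ht⟩ := IsAlgClosed.exists_root _ hne
  refine ⟨t, ?_⟩
  have := ht
  rw [IsRoot.def, eval_sub, eval_pow, eval_X, sub_eq_zero, hr, eval_add, eval_one,
    eval_finset_sum] at this
  rw [this]
  congr 1
  refine Finset.sum_congr rfl fun i _ => ?_
  rw [eval_mul, eval_C, eval_pow, eval_X, mul_pow]

lemma AS_core (p : ℕ) (hp : p.Prime) (k : Type*) [Field k] [IsAlgClosed k] [CharP k p]
    (V : Type*) [AddCommGroup V] [Module k V]
    (f : V →+ V) (hf : ∀ (c : k) (v : V), f (c ^ p • v) = c • f v)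
    (n : ℕ) (a : ℕ → k) (w : V)
    (hrel : f^[n] w = ∑ i ∈ range n, a i • f^[i] w) :
    ∃ v : V, v - f v = w := by
  haveI : Fact p.Prime := ⟨hp⟩
  haveI : ExpChar k p := ExpChar.prime hp
  -- p-th root
  set rt : k → k := fun c => (frobeniusEquiv k p).symm c with hrtdef
  have hrtp : ∀ c : k, rt c ^ p = c := fun c => frobeniusEquiv_symm_pow_p k p c
  have hrt_pow : ∀ c : k, rt (c ^ p) = c := by
    intro c
    have := frobeniusEquiv_symm_apply_frobenius k p c
    rwa [frobenius_def] at this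
  have hsemi : ∀ (c : k) (v : V), f (c • v) = rt c • f v := by
    intro c v
    conv_lhs => rw [← hrtp c]
    exact hf (rt c) v
  obtain ⟨t, ht⟩ := AS_exists_root p hp k n a
  rcases n with _ | m
  · -- n = 0 : w = 0
    simp only [Function.iterate_zero, id_eq, range_zero, Finset.sum_empty] at hrel
    exact ⟨0, by simp [hrel]⟩
  -- n = m + 1
  set c : ℕ → k := fun i => Nat.rec (1 + a 0 * t) (fun j cj => rt cj + a (j + 1) * t) i with hcdef
  have hc0 : c 0 = 1 + a 0 * t := rfl
  have hcs : ∀ j, c (j + 1) = rt (c j) + a (j + 1) * t := fun j => rfl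
  -- c j ^ p ^ j = 1 + ∑_{i ≤ j} (a i * t) ^ p ^ i
  have hcpow : ∀ j, c j ^ p ^ j = 1 + ∑ i ∈ range (j + 1), (a i * t) ^ p ^ i := by
    intro j
    induction j with
    | zero => simp [hc0, add_comm]
    | succ j ih =>
      have : c (j + 1) ^ p ^ (j + 1) = (c (j + 1) ^ p) ^ p ^ j := by
        rw [← pow_mul, ← pow_succ']
      rw [this, hcs j, add_pow_char, hrtp, add_pow_char_pow, ih, ← pow_mul, ← pow_succ',
        Finset.sum_range_succ]
      rw [Finset.sum_range_succ (fun x => (a x * t) ^ p ^ x) (j + 1), Finset.sum_range_succ]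
      ring
  -- c m = t ^ p
  have hcm : c m = t ^ p := by
    have h1 : c m ^ p ^ m = (t ^ p) ^ p ^ m := by
      rw [hcpow m, ← pow_mul, ← pow_succ']
      rw [ht]; ring
    have h2 : (c m - t ^ p) ^ p ^ m = 0 := by
      rw [sub_pow_char_pow, h1, sub_self]
    exact sub_eq_zero.mp (pow_eq_zero_iff (pow_pos hp.pos m).ne' |>.mp h2)
  have hrtcm : rt (c m) = t := by rw [hcm, hrt_pow]
  -- the solution
  refine ⟨∑ i ∈ range (m + 1), c i • f^[i] w, ?_⟩
  have hfv : f (∑ i ∈ range (m + 1), c i • f^[i] w)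
      = ∑ i ∈ range m, rt (c i) • f^[i + 1] w + ∑ i ∈ range (m + 1), (t * a i) • f^[i] w := by
    rw [map_sum]
    have : ∀ i ∈ range (m + 1), f (c i • f^[i] w) = rt (c i) • f^[i + 1] w := by
      intro i _
      rw [hsemi, Function.iterate_succ_apply']
    rw [Finset.sum_congr rfl this, Finset.sum_range_succ, hrtcm, hrel, Finset.smul_sum]
    congr 1
    refine Finset.sum_congr rfl fun i _ => ?_
    rw [smul_smul]
  rw [hfv, Finset.sum_range_succ' (fun i => c i • f^[i] w),
    Finset.sum_range_succ' (fun i => (t * a i) • f^[i] w)]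
  simp only [Function.iterate_zero, id_eq]
  have hterm : ∀ i ∈ range m,
      c (i + 1) • f^[i + 1] w = rt (c i) • f^[i + 1] w + (t * a (i + 1)) • f^[i + 1] w := by
    intro i _
    rw [← add_smul, hcs i]
    ring_nf
  rw [Finset.sum_congr rfl hterm, Finset.sum_add_distrib]
  have : c 0 • w = w + (t * a 0) • w := by
    rw [hc0, add_smul, one_smul, mul_comm]
  rw [this]
  abel

/-- Over an algebraically closed field `k` of characteristic `p`, for a `p^{-1}`-linear
additive map `f` of a finite-dimensional `k`-vector space `V` (i.e. `f (c^p • v) = c • f v`),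
the map `v ↦ v - f v` is surjective. -/
theorem id_sub_pinv_linear_surjective (p : ℕ) (hp : p.Prime)
    (k : Type*) [Field k] [IsAlgClosed k] [CharP k p]
    (V : Type*) [AddCommGroup V] [Module k V] [FiniteDimensional k V]
    (f : V →+ V) (hf : ∀ (c : k) (v : V), f (c ^ p • v) = c • f v) :
    ∀ w : V, ∃ v : V, v - f v = w := by
  intro w
  have hdep : ¬ LinearIndependent k (fun i : ℕ => f^[i] w) :=
    Module.Finite.not_linearIndependent_of_infinite _
  obtain ⟨s, g, hsum, i0, hi0s, hi0⟩ := not_linearIndependent_iff.mp hdep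
  classical
  set s' : Finset ℕ := s.filter (fun i => g i ≠ 0) with hs'
  have hs'ne : s'.Nonempty := ⟨i0, Finset.mem_filter.mpr ⟨hi0s, hi0⟩⟩
  set m := s'.max' hs'ne with hm
  have hms' : m ∈ s' := s'.max'_mem hs'ne
  have hgm : g m ≠ 0 := (Finset.mem_filter.mp hms').2
  have hsum' : ∑ i ∈ s', g i • f^[i] w = 0 := by
    rw [← hsum]
    exact Finset.sum_filter_of_ne (fun i _ h => by
      intro hgi; rw [hgi, zero_smul] at h; exact h rfl)
  -- solve for f^[m] w
  have hsub : s'.erase m ⊆ Finset.range m := by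
    intro i hi
    rw [Finset.mem_range]
    exact lt_of_le_of_ne (s'.le_max' i (Finset.mem_of_mem_erase hi))
      (Finset.ne_of_mem_erase hi)
  set a : ℕ → k := fun i => if i ∈ s'.erase m then -(g i) / g m else 0 with ha
  have hrel : f^[m] w = ∑ i ∈ Finset.range m, a i • f^[i] w := by
    have h1 : ∑ i ∈ s'.erase m, g i • f^[i] w + g m • f^[m] w = 0 := by
      rw [Finset.sum_erase_add s' _ hms']
      exact hsum'
    have h2 : f^[m] w = ∑ i ∈ s'.erase m, a i • f^[i] w := by
      have : g m • f^[m] w = ∑ i ∈ s'.erase m, (-(g i)) • f^[i] w := by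
        rw [Finset.sum_congr rfl (fun i _ => neg_smul (g i) ((f^[i]) w)),
          Finset.sum_neg_distrib]
        exact eq_neg_of_add_eq_zero_right h1
      calc f^[m] w = (g m)⁻¹ • (g m • f^[m] w) := by
            rw [smul_smul, inv_mul_cancel₀ hgm, one_smul]
        _ = ∑ i ∈ s'.erase m, a i • f^[i] w := by
            rw [this, Finset.smul_sum]
            refine Finset.sum_congr rfl fun i hi => ?_
            rw [smul_smul, ha]
            simp only [hi, if_pos]
            rw [div_eq_inv_mul]
    rw [h2]
    refine Finset.sum_subset hsub fun i _ hi => ?_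
    rw [ha]; simp [hi]
  exact AS_core p hp k V f hf m a w hrel
end
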